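/- arXiv:2110.09701 — 11 statements merged into one kernel-verified Lean document; each statement's English description precedes it below -/
import Mathlib

section
/- If H is an r-uniform hypergraph with n vertices and q ≥ 1 edges, and H admits at least r^{l-1} + 1 pairwise distinct r-partitions for some integer l ≥ 1, then there exists an r-partite r-uniform hypergraph with n − l vertices and exactly q edges. -/
/-- An `r`-uniform hypergraph: every edge has exactly `r` vertices. -/
def IsRUniform {V : Type} [DecidableEq V] (r : ℕ) (H : Finset (Finset V)) : Prop :=
  ∀ e ∈ H, e.card = r

/-- An `r`-partition of an `r`-uniform hypergraph `H` on the vertex set `V`: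
a partition of `V` into `r` nonempty blocks such that every edge of `H` meets
every block in exactly one vertex. -/
def IsRPartition {V : Type} [Fintype V] [DecidableEq V] (r : ℕ)
    (H : Finset (Finset V)) (P : Finset (Finset V)) : Prop :=
  P.card = r ∧ (∀ b ∈ P, b.Nonempty) ∧ (∀ v : V, ∃! b, b ∈ P ∧ v ∈ b) ∧
    ∀ e ∈ H, ∀ b ∈ P, (e ∩ b).card = 1

/-!
Fix an edge `e`. Two distinct `r`-partitions differ in which vertex of `e` some vertex `w` is
joined to; by pigeonhole over the `r` vertices of `e`, some `u ∈ e` is joined to `w` in more than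
a `1/r` fraction of the given partitions, while some partition separates `u` and `w`. Merging `w`
into `u` keeps the hypergraph `r`-uniform (no edge contains both), keeps its edges distinct
(thanks to the separating partition), and turns the partitions joining `u` and `w` into distinct
`r`-partitions of the merged hypergraph. Each merge removes one vertex and divides the number of
partitions by at most `r`, so `r ^ (l - 1) + 1` partitions allow `l` merges.
-/

open Finset Function

def SameBlock {V : Type} (P : Finset (Finset V)) (x y : V) : Prop :=
  ∃ b ∈ P, x ∈ b ∧ y ∈ b

instance {V : Type} [DecidableEq V] (P : Finset (Finset V)) (x y : V) :
    Decidable (SameBlock P x y) :=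
  inferInstanceAs (Decidable (∃ b ∈ P, x ∈ b ∧ y ∈ b))

theorem SameBlock.symm {V : Type} {P : Finset (Finset V)} {x y : V} (h : SameBlock P x y) :
    SameBlock P y x :=
  let ⟨b, hb, hx, hy⟩ := h
  ⟨b, hb, hy, hx⟩

namespace IsRPartition

variable {V : Type} [Fintype V] [DecidableEq V] {r : ℕ} {H P : Finset (Finset V)}
  {b b' e : Finset V} {x y z : V}

theorem exists_mem (hP : IsRPartition r H P) (x : V) : ∃ b ∈ P, x ∈ b :=
  let ⟨b, hb, _⟩ := hP.2.2.1 x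
  ⟨b, hb⟩

theorem eq_of_mem_of_mem (hP : IsRPartition r H P) (hb : b ∈ P) (hb' : b' ∈ P) (hx : x ∈ b)
    (hx' : x ∈ b') : b = b' :=
  (hP.2.2.1 x).unique ⟨hb, hx⟩ ⟨hb', hx'⟩

theorem sameBlock_refl (hP : IsRPartition r H P) (x : V) : SameBlock P x x :=
  let ⟨b, hb, hx⟩ := hP.exists_mem x
  ⟨b, hb, hx, hx⟩

theorem mem_iff_sameBlock (hP : IsRPartition r H P) (hb : b ∈ P) (hx : x ∈ b) :
    y ∈ b ↔ SameBlock P x y := by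
  refine ⟨fun hy => ⟨b, hb, hx, hy⟩, ?_⟩
  rintro ⟨c, hc, hxc, hyc⟩
  rwa [hP.eq_of_mem_of_mem hb hc hx hxc]

theorem sameBlock_trans (hP : IsRPartition r H P) (hxy : SameBlock P x y)
    (hyz : SameBlock P y z) : SameBlock P x z := by
  obtain ⟨b, hb, hxb, hyb⟩ := hxy
  exact ⟨b, hb, hxb, (hP.mem_iff_sameBlock hb hyb).2 hyz⟩

theorem eq_of_sameBlock_of_mem_edge (hP : IsRPartition r H P) (he : e ∈ H) (hx : x ∈ e)
    (hy : y ∈ e) (hxy : SameBlock P x y) : x = y := by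
  obtain ⟨b, hb, hxb, hyb⟩ := hxy
  exact card_le_one.1 (hP.2.2.2 e he b hb).le x (mem_inter.2 ⟨hx, hxb⟩) y (mem_inter.2 ⟨hy, hyb⟩)

theorem exists_mem_edge_sameBlock (hP : IsRPartition r H P) (he : e ∈ H) (x : V) :
    ∃ y ∈ e, SameBlock P y x := by
  obtain ⟨b, hb, hxb⟩ := hP.exists_mem x
  obtain ⟨y, hy⟩ := card_eq_one.1 (hP.2.2.2 e he b hb)
  have hy' : y ∈ e ∩ b := hy ▸ mem_singleton_self y
  exact ⟨y, (mem_inter.1 hy').1, b, hb, (mem_inter.1 hy').2, hxb⟩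

theorem subset_of_sameBlock_iff {r' : ℕ} {H' Q : Finset (Finset V)} (hP : IsRPartition r H P)
    (hQ : IsRPartition r' H' Q) (h : ∀ x y, SameBlock P x y ↔ SameBlock Q x y) : P ⊆ Q := by
  intro b hb
  obtain ⟨x, hx⟩ := hP.2.1 b hb
  obtain ⟨c, hc, hxc⟩ := hQ.exists_mem x
  convert hc using 1
  ext y
  rw [hP.mem_iff_sameBlock hb hx, hQ.mem_iff_sameBlock hc hxc, h]

theorem eq_of_sameBlock_iff {r' : ℕ} {H' Q : Finset (Finset V)} (hP : IsRPartition r H P)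
    (hQ : IsRPartition r' H' Q) (h : ∀ x y, SameBlock P x y ↔ SameBlock Q x y) : P = Q :=
  (hP.subset_of_sameBlock_iff hQ h).antisymm
    (hQ.subset_of_sameBlock_iff hP fun x y => (h x y).symm)

theorem exists_sameBlock_not_sameBlock {Q : Finset (Finset V)} (hP : IsRPartition r H P)
    (hQ : IsRPartition r H Q) (he : e ∈ H) (hPQ : P ≠ Q) :
    ∃ w, ∃ x ∈ e, SameBlock P x w ∧ ¬SameBlock Q x w := by
  by_contra! hPQe
  refine hPQ (hP.eq_of_sameBlock_iff hQ fun y z => ?_)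
  obtain ⟨x, hx, hxy⟩ := hP.exists_mem_edge_sameBlock he y
  have hxyQ := hPQe y x hx hxy
  constructor
  · exact fun hyz => hQ.sameBlock_trans hxyQ.symm (hPQe z x hx (hP.sameBlock_trans hxy hyz))
  · intro hyz
    obtain ⟨x', hx', hx'z⟩ := hP.exists_mem_edge_sameBlock he z
    obtain rfl : x = x' := hQ.eq_of_sameBlock_of_mem_edge he hx hx'
      (hQ.sameBlock_trans (hQ.sameBlock_trans hxyQ hyz) (hPQe z x' hx' hx'z).symm)
    exact hP.sameBlock_trans hxy.symm hx'z

theorem isEmpty_of_zero (hP : IsRPartition 0 H P) : IsEmpty V := by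
  refine ⟨fun x => ?_⟩
  obtain ⟨b, hb, -⟩ := hP.exists_mem x
  rw [card_eq_zero.1 hP.1] at hb
  exact notMem_empty b hb

end IsRPartition

section Image

variable {V W : Type} [Fintype V] [DecidableEq V] {r : ℕ}
  {H P : Finset (Finset V)} {f : V → W}

namespace IsRPartition

theorem mem_of_apply_eq (hP : IsRPartition r H P) (hf : ∀ x y, f x = f y → SameBlock P x y)
    {b : Finset V} (hb : b ∈ P) {x y : V} (hy : y ∈ b) (hxy : f x = f y) : x ∈ b :=
  (hP.mem_iff_sameBlock hb hy).2 (hf y x hxy.symm)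

theorem injOn_of_mem_edge (hP : IsRPartition r H P) (hf : ∀ x y, f x = f y → SameBlock P x y)
    {e : Finset V} (he : e ∈ H) : Set.InjOn f e :=
  fun _ hx _ hy hxy => hP.eq_of_sameBlock_of_mem_edge he hx hy (hf _ _ hxy)

theorem sameBlock_image_iff [DecidableEq W] (hP : IsRPartition r H P)
    (hf : ∀ x y, f x = f y → SameBlock P x y) {x y : V} :
    SameBlock (P.image (Finset.image f)) (f x) (f y) ↔ SameBlock P x y := by
  refine ⟨?_, fun ⟨b, hb, hxb, hyb⟩ => ⟨b.image f, mem_image_of_mem _ hb,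
    mem_image_of_mem f hxb, mem_image_of_mem f hyb⟩⟩
  rintro ⟨c, hc, hxb, hyb⟩
  obtain ⟨b, hb, rfl⟩ := mem_image.1 hc
  obtain ⟨x', hx', hxx'⟩ := mem_image.1 hxb
  obtain ⟨y', hy', hyy'⟩ := mem_image.1 hyb
  exact ⟨b, hb, hP.mem_of_apply_eq hf hb hx' hxx'.symm, hP.mem_of_apply_eq hf hb hy' hyy'.symm⟩

theorem image [Fintype W] [DecidableEq W] (hP : IsRPartition r H P) (hsurj : Surjective f)
    (hf : ∀ x y, f x = f y → SameBlock P x y) :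
    IsRPartition r (H.image (Finset.image f)) (P.image (Finset.image f)) := by
  have hinj : Set.InjOn (Finset.image f) P := by
    intro b hb b' hb' hbb'
    obtain ⟨x, hx⟩ := hP.2.1 b hb
    obtain ⟨y, hy, hxy⟩ := mem_image.1 (hbb' ▸ mem_image_of_mem f hx : f x ∈ b'.image f)
    exact hP.eq_of_mem_of_mem hb hb' hx (hP.mem_of_apply_eq hf hb' hy hxy.symm)
  refine ⟨by rw [card_image_of_injOn hinj, hP.1], ?_, fun v => ?_, ?_⟩
  · simp only [mem_image, forall_exists_index, and_imp, forall_apply_eq_imp_iff₂]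
    exact fun b hb => (hP.2.1 b hb).image f
  · obtain ⟨x, rfl⟩ := hsurj v
    obtain ⟨b, hb, hxb⟩ := hP.exists_mem x
    refine ⟨b.image f, ⟨mem_image_of_mem _ hb, mem_image_of_mem f hxb⟩, ?_⟩
    rintro _ ⟨hc', hxc⟩
    obtain ⟨c, hc, rfl⟩ := mem_image.1 hc'
    obtain ⟨y, hy, hyx⟩ := mem_image.1 hxc
    rw [hP.eq_of_mem_of_mem hc hb (hP.mem_of_apply_eq hf hc hy hyx.symm) hxb]
  · simp only [mem_image, forall_exists_index, and_imp, forall_apply_eq_imp_iff₂]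
    intro e he b hb
    have hinter : e.image f ∩ b.image f = (e ∩ b).image f := by
      refine (image_inter_subset f e b).antisymm' fun y hy => ?_
      obtain ⟨⟨x, hx, rfl⟩, ⟨x', hx', hxx'⟩⟩ := And.imp mem_image.1 mem_image.1 (mem_inter.1 hy)
      exact mem_image_of_mem f (mem_inter.2 ⟨hx, hP.mem_of_apply_eq hf hb hx' hxx'.symm⟩)
    obtain ⟨z, hz⟩ := card_eq_one.1 (hP.2.2.2 e he b hb)
    rw [hinter, hz, image_singleton, card_singleton]

theorem eq_of_image_eq [DecidableEq W] {Q : Finset (Finset V)} (hP : IsRPartition r H P)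
    (hQ : IsRPartition r H Q) (hfP : ∀ x y, f x = f y → SameBlock P x y)
    (hfQ : ∀ x y, f x = f y → SameBlock Q x y)
    (h : P.image (Finset.image f) = Q.image (Finset.image f)) : P = Q :=
  hP.eq_of_sameBlock_iff hQ fun x y => by
    rw [← hP.sameBlock_image_iff hfP, h, hQ.sameBlock_image_iff hfQ]

end IsRPartition

theorem IsRUniform.image [DecidableEq W] (hH : IsRUniform r H) (hP : IsRPartition r H P)
    (hf : ∀ x y, f x = f y → SameBlock P x y) : IsRUniform r (H.image (image f)) := by
  simp only [IsRUniform, mem_image, forall_exists_index, and_imp, forall_apply_eq_imp_iff₂]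
  exact fun e he => (card_image_of_injOn (hP.injOn_of_mem_edge hf he)).trans (hH e he)

end Image

section Merge

variable {V : Type} [DecidableEq V] {u w : V}

def mergeVertex (u w : V) (huw : u ≠ w) (x : V) : {x : V // x ≠ w} :=
  if hx : x = w then ⟨u, huw⟩ else ⟨x, hx⟩

theorem mergeVertex_surjective (huw : u ≠ w) : Surjective (mergeVertex u w huw) :=
  fun y => ⟨y, dif_neg y.2⟩

theorem eq_or_eq_of_mergeVertex_eq (huw : u ≠ w) {x y : V}
    (h : mergeVertex u w huw x = mergeVertex u w huw y) : x = y ∨ s(x, y) = s(u, w) := by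
  unfold mergeVertex at h
  split_ifs at h with hx hy hy <;> simp_all [Subtype.ext_iff]

variable [Fintype V] {r : ℕ} {H P Q : Finset (Finset V)}

theorem IsRPartition.sameBlock_of_mergeVertex_eq (hP : IsRPartition r H P)
    (hPuw : SameBlock P u w) (huw : u ≠ w) {x y : V}
    (h : mergeVertex u w huw x = mergeVertex u w huw y) : SameBlock P x y := by
  rcases eq_or_eq_of_mergeVertex_eq huw h with rfl | hxy
  · exact hP.sameBlock_refl x
  · rcases Sym2.eq_iff.1 hxy with ⟨rfl, rfl⟩ | ⟨rfl, rfl⟩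
    exacts [hPuw, hPuw.symm]

theorem injOn_image_mergeVertex (hP : IsRPartition r H P) (hQ : IsRPartition r H Q)
    (hPuw : SameBlock P u w) (hQuw : ¬SameBlock Q u w) (huw : u ≠ w) :
    Set.InjOn (Finset.image (mergeVertex u w huw)) H := by
  set f := mergeVertex u w huw
  suffices hsub : ∀ e ∈ H, ∀ e' ∈ H, e.image f = e'.image f → e ⊆ e' from
    fun e he e' he' h => (hsub e he e' he' h).antisymm (hsub e' he' e he h.symm)
  intro e he e' he' hee' x hx
  obtain ⟨y, hy, hyx⟩ := mem_image.1 (hee' ▸ mem_image_of_mem f hx)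
  rcases eq_or_eq_of_mergeVertex_eq huw hyx with rfl | hyxuw
  · exact hy
  exfalso
  have hQyx : ¬SameBlock Q y x := by
    rcases Sym2.eq_iff.1 hyxuw with ⟨rfl, rfl⟩ | ⟨rfl, rfl⟩
    exacts [hQuw, fun h => hQuw h.symm]
  have hye : y ∉ e := fun hye =>
    hQyx (hP.eq_of_sameBlock_of_mem_edge he hye hx (hP.sameBlock_of_mergeVertex_eq hPuw huw hyx)
      ▸ hQ.sameBlock_refl x)
  -- the vertex `z` of `e` in the `Q`-block of `y` is not merged, so it lies in `e'` next to `y`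
  obtain ⟨z, hz, hzy⟩ := hQ.exists_mem_edge_sameBlock he y
  obtain ⟨z', hz', hz'z⟩ := mem_image.1 (hee' ▸ mem_image_of_mem f hz)
  obtain rfl : z' = z := by
    refine (eq_or_eq_of_mergeVertex_eq huw hz'z).resolve_right fun h => ?_
    have : z ∈ s(y, x) := hyxuw ▸ h ▸ Sym2.mem_mk_right z' z
    rcases Sym2.mem_iff.1 this with rfl | rfl
    exacts [hye hz, hQyx hzy.symm]
  exact hye (hQ.eq_of_sameBlock_of_mem_edge he' hz' hy hzy ▸ hz)

end Merge

section Count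

variable {V : Type} [Fintype V] [DecidableEq V] {r m : ℕ} {H : Finset (Finset V)}
  {Ps : Finset (Finset (Finset V))}

theorem exists_separated_sameBlock_lt_card (hH : IsRUniform r H) (hHne : H.Nonempty)
    (hPs : ∀ P ∈ Ps, IsRPartition r H P) (hPs₁ : 1 < #Ps) (hm : r * m < #Ps) :
    ∃ u w, (∃ Q ∈ Ps, ¬SameBlock Q u w) ∧ m < #{P ∈ Ps | SameBlock P u w} := by
  obtain ⟨e, he⟩ := hHne
  obtain ⟨P, hPPs, Q, hQPs, hPQ⟩ := one_lt_card.1 hPs₁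
  have hP := hPs P hPPs
  obtain ⟨w, x, hx, hPxw, hQxw⟩ := hP.exists_sameBlock_not_sameBlock (hPs Q hQPs) he hPQ
  -- pigeonhole on the vertex of `e` that each partition joins to `w`
  have hjoin : ∀ R ∈ Ps, ∃ y ∈ e, SameBlock R y w := fun R hR =>
    (hPs R hR).exists_mem_edge_sameBlock he w
  have : Inhabited V := ⟨w⟩
  choose! g hge hg using hjoin
  obtain ⟨u, hu, hcard⟩ :=
    exists_lt_card_fiber_of_mul_lt_card_of_maps_to (n := m) hge (by rwa [hH e he])
  refine ⟨u, w, ?_, hcard.trans_le (card_le_card fun R hR => ?_)⟩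
  · by_cases hux : u = x
    · exact ⟨Q, hQPs, hux ▸ hQxw⟩
    · exact ⟨P, hPPs, fun hPuw =>
        hux (hP.eq_of_sameBlock_of_mem_edge he hu hx (hP.sameBlock_trans hPuw hPxw.symm))⟩
  · rw [mem_filter] at hR ⊢
    exact ⟨hR.1, hR.2 ▸ hg R hR.1⟩

theorem exists_merge (hH : IsRUniform r H) (hHne : H.Nonempty)
    (hPs : ∀ P ∈ Ps, IsRPartition r H P) (hPs₁ : 1 < #Ps) (hm : r * m < #Ps) :
    ∃ (W : Type) (_ : Fintype W) (_ : DecidableEq W), Fintype.card W + 1 = Fintype.card V ∧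
      ∃ (H' : Finset (Finset W)) (Ps' : Finset (Finset (Finset W))), IsRUniform r H' ∧
        #H' = #H ∧ H'.Nonempty ∧ (∀ P ∈ Ps', IsRPartition r H' P) ∧ m < #Ps' := by
  obtain ⟨u, w, ⟨Q, hQ, hQuw⟩, hm⟩ := exists_separated_sameBlock_lt_card hH hHne hPs hPs₁ hm
  have huw : u ≠ w := fun h => hQuw (h ▸ (hPs Q hQ).sameBlock_refl u)
  set f := mergeVertex u w huw
  set Js := {P ∈ Ps | SameBlock P u w}
  have hJs : ∀ P ∈ Js, IsRPartition r H P ∧ ∀ x y, f x = f y → SameBlock P x y := by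
    intro P hP
    obtain ⟨hPPs, hPuw⟩ := mem_filter.1 hP
    exact ⟨hPs P hPPs, fun x y => (hPs P hPPs).sameBlock_of_mergeVertex_eq hPuw huw⟩
  obtain ⟨P₀, hP₀⟩ : Js.Nonempty := card_pos.1 (by omega)
  have hJsinj : Set.InjOn (fun P : Finset (Finset V) => P.image (image f)) Js :=
    fun P hP P' hP' => (hJs P hP).1.eq_of_image_eq (hJs P' hP').1 (hJs P hP).2 (hJs P' hP').2
  refine ⟨{x // x ≠ w}, inferInstance, inferInstance, ?_, H.image (image f),
    Js.image fun P => P.image (image f), hH.image (hJs P₀ hP₀).1 (hJs P₀ hP₀).2,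
    card_image_of_injOn (injOn_image_mergeVertex (hJs P₀ hP₀).1 (hPs Q hQ)
      (mem_filter.1 hP₀).2 hQuw huw), hHne.image _, ?_, by rwa [card_image_of_injOn hJsinj]⟩
  · have : 0 < Fintype.card V := Fintype.card_pos_iff.2 ⟨w⟩
    simp only [ne_eq, Fintype.card_subtype_compl, Fintype.card_unique]
    omega
  · simp only [forall_mem_image]
    exact fun P hP => (hJs P hP).1.image (mergeVertex_surjective huw) (hJs P hP).2

end Count

def ExistsRPartiteHypergraph (r m q : ℕ) : Prop :=
  ∃ H : Finset (Finset (Fin m)), IsRUniform r H ∧ H.card = q ∧ ∃ P, IsRPartition r H P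

theorem existsRPartiteHypergraph_of_isRPartition {V : Type} [Fintype V] [DecidableEq V]
    {r : ℕ} {H P : Finset (Finset V)} (hH : IsRUniform r H) (hP : IsRPartition r H P) :
    ExistsRPartiteHypergraph r (Fintype.card V) #H :=
  let f := Fintype.equivFin V
  have hf : ∀ x y, f x = f y → SameBlock P x y := fun x _ h =>
    f.injective h ▸ hP.sameBlock_refl x
  ⟨H.image (image f), hH.image hP hf, card_image_of_injective _ (image_injective f.injective),
    _, hP.image f.surjective hf⟩

theorem existsRPartiteHypergraph_of_pow_lt_card {r : ℕ} (hr : 1 ≤ r) (j : ℕ) {V : Type}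
    [Fintype V] [DecidableEq V] {H : Finset (Finset V)} {Ps : Finset (Finset (Finset V))}
    (hH : IsRUniform r H) (hHne : H.Nonempty) (hPs : ∀ P ∈ Ps, IsRPartition r H P)
    (hj : r ^ j < #Ps) : ExistsRPartiteHypergraph r (Fintype.card V - (j + 1)) #H := by
  induction j generalizing V with
  | zero =>
    obtain ⟨W, _, _, hW, H', Ps', hH', hcard, -, hPs', hpos⟩ :=
      exists_merge (m := 0) hH hHne hPs (by simpa using hj) (by omega)
    obtain ⟨P, hP⟩ := card_pos.1 hpos
    rw [← hcard, show Fintype.card V - (0 + 1) = Fintype.card W by omega]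
    exact existsRPartiteHypergraph_of_isRPartition hH' (hPs' P hP)
  | succ j ih =>
    obtain ⟨W, _, _, hW, H', Ps', hH', hcard, hH'ne, hPs', hlt⟩ :=
      exists_merge (m := r ^ j) hH hHne hPs
        ((Nat.one_le_pow _ _ hr).trans_lt hj) (by rwa [← pow_succ'])
    rw [← hcard, show Fintype.card V - (j + 1 + 1) = Fintype.card W - (j + 1) by omega]
    exact ih hH' hH'ne hPs' hlt

/-- If an `r`-uniform hypergraph with `n` vertices and `q ≥ 1` edges admits at least
`r^(l-1) + 1` pairwise distinct `r`-partitions for some `l ≥ 1`, then there exists an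
`r`-partite `r`-uniform hypergraph with `n - l` vertices and exactly `q` edges. -/
theorem exists_rPartite_hypergraph {V : Type} [Fintype V] [DecidableEq V]
    (r l n q : ℕ) (hl : 1 ≤ l) (hq : 1 ≤ q) (hn : Fintype.card V = n)
    (H : Finset (Finset V)) (hH : IsRUniform r H) (hcard : H.card = q)
    (P : Fin (r ^ (l - 1) + 1) → Finset (Finset V))
    (hinj : Function.Injective P) (hP : ∀ i, IsRPartition r H (P i)) :
    ∃ H' : Finset (Finset (Fin (n - l))),
      IsRUniform r H' ∧ H'.card = q ∧ ∃ P', IsRPartition r H' P' := by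
  obtain rfl | hr := Nat.eq_zero_or_pos r
  · have := (hP 0).isEmpty_of_zero
    rw [show n - l = Fintype.card V by simp only [Fintype.card_eq_zero] at hn ⊢; omega, ← hcard]
    exact existsRPartiteHypergraph_of_isRPartition hH (hP 0)
  · have hPs : ∀ Q ∈ univ.image P, IsRPartition r H Q := by simpa using hP
    have hPscard : #(univ.image P) = r ^ (l - 1) + 1 := by
      rw [card_image_of_injective _ hinj, card_fin]
    have := existsRPartiteHypergraph_of_pow_lt_card hr (l - 1) hH (card_pos.1 (by omega)) hPs
      (by omega)
    rwa [Nat.sub_add_cancel hl, hn, hcard] at this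
end

section
/- For integers 1 ≤ r ≤ n and 0 ≤ l ≤ n − r, the set D_r(T_n) of rank-r transformations contains an r^l × π_r(n−l) rectangular band; that is, there is an injective semigroup homomorphism from the r^l × π_r(n−l) rectangular band into T_n whose image consists of transformations of rank r. -/
/-- Multiplication of the full transformation semigroup: `(f * g) x = g (f x)`. -/
def tMul {n : ℕ} (f g : Fin n → Fin n) : Fin n → Fin n := fun x => g (f x)

def trank {n : ℕ} (f : Fin n → Fin n) : ℕ := (Finset.univ.image f).card

/-- `piComp r n` is `π_r(n)`: the maximum of `s₁ ⋯ s_r` over all compositions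
`(s₁, …, s_r)` of `n` of length `r` into positive parts. -/
noncomputable def piComp (r n : ℕ) : ℕ :=
  sSup {m | ∃ s : Fin r → ℕ, (∀ i, 1 ≤ s i) ∧ (∑ i, s i) = n ∧ m = ∏ i, s i}

/-!
Fix a composition `s` of `n - l` of length `r` with `∏ sᵢ = π_r(n - l)` and split `{1,…,n}`
into `l` loose points and `r` blocks of sizes `s₁, …, s_r`. A map `κ` sending each block to its
index and the loose points anywhere, followed by a map `σ` choosing one point in each block, is
an idempotent of rank `r`. Any such `κ` is a left inverse of any such `σ`, so
`(σ' ∘ κ') ∘ (σ ∘ κ) = σ' ∘ κ`: the `r^l` choices of `κ` and the `∏ sᵢ` choices of `σ` form a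
rectangular band.
-/

open Function

theorem exists_composition_piComp_eq_prod {r m : ℕ} (hr : 1 ≤ r) (hrm : r ≤ m) :
    ∃ s : Fin r → ℕ, (∀ i, 1 ≤ s i) ∧ (∑ i, s i) = m ∧ piComp r m = ∏ i, s i := by
  set S := {x | ∃ s : Fin r → ℕ, (∀ i, 1 ≤ s i) ∧ (∑ i, s i) = m ∧ x = ∏ i, s i}
  have hne : S.Nonempty := by
    let i₀ : Fin r := ⟨0, hr⟩
    refine ⟨_, fun i => 1 + if i = i₀ then m - r else 0, fun _ => Nat.le_add_right 1 _, ?_, rfl⟩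
    rw [Finset.sum_add_distrib, Finset.sum_ite_eq' Finset.univ i₀]
    simp only [Finset.sum_const, Finset.card_univ, Fintype.card_fin, smul_eq_mul, mul_one,
      Finset.mem_univ, if_true]
    omega
  have hbdd : BddAbove S := by
    refine ⟨m ^ r, ?_⟩
    rintro _ ⟨s, -, rfl, rfl⟩
    simpa using Finset.prod_le_pow_card Finset.univ s (∑ i, s i)
      fun i _ => Finset.single_le_sum (fun _ _ => Nat.zero_le _) (Finset.mem_univ i)
  exact Nat.sSup_mem hne hbdd

section BandMap

variable {α β X ι : Type*} {κ : α → X → ι} {σ : β → ι → X}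

def bandMap (κ : α → X → ι) (σ : β → ι → X) (p : α × β) : X → X := σ p.2 ∘ κ p.1

theorem bandMap_comp (hinv : ∀ a b, LeftInverse (κ a) (σ b)) (p q : α × β) :
    bandMap κ σ q ∘ bandMap κ σ p = bandMap κ σ (p.1, q.2) := by
  funext x
  simp only [bandMap, comp_apply, hinv q.1 p.2 _]

theorem bandMap_injective (hinv : ∀ a b, LeftInverse (κ a) (σ b)) (hκ : Injective κ)
    (hσ : Injective σ) : Injective (bandMap κ σ) := by
  rintro ⟨a, b⟩ ⟨a', b'⟩ h
  have ha : κ a = κ a' := by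
    have := congrArg (κ a ∘ ·) h
    simpa only [bandMap, ← comp_assoc, (hinv _ _).comp_eq_id, id_comp] using this
  have hb : σ b = σ b' := by
    rw [← hκ ha] at h
    exact (hinv a b).surjective.injective_comp_right h
  rw [hκ ha, hσ hb]

theorem card_image_bandMap [Fintype X] [DecidableEq X] [Fintype ι]
    (hinv : ∀ a b, LeftInverse (κ a) (σ b)) (p : α × β) :
    (Finset.univ.image (bandMap κ σ p)).card = Fintype.card ι := by
  classical
  rw [bandMap, ← Finset.image_image, Finset.image_univ_of_surjective (hinv p.1 p.2).surjective,
    Finset.card_image_of_injective _ (hinv p.1 p.2).injective, Finset.card_univ]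

end BandMap

section Blocks

variable {P ι : Type*} {F : ι → Type*}

def blockKernel (a : P → ι) : P ⊕ Sigma F → ι := Sum.elim a Sigma.fst

def blockSection (b : ∀ i, F i) (i : ι) : P ⊕ Sigma F := Sum.inr ⟨i, b i⟩

theorem blockKernel_leftInverse (a : P → ι) (b : ∀ i, F i) :
    LeftInverse (blockKernel a) (blockSection (P := P) b) :=
  fun _ => rfl

theorem blockKernel_injective : Injective (blockKernel (P := P) (F := F)) :=
  fun _ _ h => funext fun j => congrFun h (Sum.inl j)

theorem blockSection_injective : Injective (blockSection (P := P) (F := F)) := by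
  intro b b' h
  funext i
  simpa [blockSection] using congrFun h i

end Blocks

theorem exists_transversal_kernels_sections {r : ℕ} (l n : ℕ) (s : Fin r → ℕ)
    (hn : l + ∑ i, s i = n) :
    ∃ (κ : Fin (r ^ l) → Fin n → Fin r) (σ : Fin (∏ i, s i) → Fin r → Fin n),
      Injective κ ∧ Injective σ ∧ ∀ a b, LeftInverse (κ a) (σ b) := by
  let e : (Fin l ⊕ Σ i, Fin (s i)) ≃ Fin n := Fintype.equivOfCardEq (by simp [hn])
  let A : Fin (r ^ l) ≃ (Fin l → Fin r) := Fintype.equivOfCardEq (by simp)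
  let B : Fin (∏ i, s i) ≃ ∀ i, Fin (s i) := Fintype.equivOfCardEq (by simp)
  refine ⟨fun a => blockKernel (A a) ∘ e.symm, fun b => e ∘ blockSection (B b), ?_, ?_, ?_⟩
  · exact e.symm.surjective.injective_comp_right.comp (blockKernel_injective.comp A.injective)
  · exact e.injective.comp_left.comp (blockSection_injective.comp B.injective)
  · intro a b i
    simp only [comp_apply, Equiv.symm_apply_apply, blockKernel_leftInverse (A a) (B b) i]

/-- For `1 ≤ r ≤ n` and `0 ≤ l ≤ n - r`, the set of rank-`r` elements of `T_n` contains an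
`r^l × π_r(n-l)` rectangular band: there is an injective semigroup homomorphism from the
`r^l × π_r(n-l)` rectangular band into `T_n` whose image consists of rank-`r` maps. -/
theorem rectangular_band_in_Dr (n r l : ℕ) (hr1 : 1 ≤ r) (hrn : r ≤ n) (hl : l ≤ n - r) :
    ∃ φ : Fin (r ^ l) × Fin (piComp r (n - l)) → (Fin n → Fin n),
      Function.Injective φ ∧
      (∀ x y : Fin (r ^ l) × Fin (piComp r (n - l)), φ (x.1, y.2) = tMul (φ x) (φ y)) ∧
      ∀ x, trank (φ x) = r := by
  obtain ⟨s, -, hsum, hprod⟩ :=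
    exists_composition_piComp_eq_prod hr1 (show r ≤ n - l by omega)
  obtain ⟨κ, σ, hκ, hσ, hinv⟩ :=
    exists_transversal_kernels_sections l n s (show l + ∑ i, s i = n by omega)
  rw [hprod]
  refine ⟨bandMap κ σ, bandMap_injective hinv hκ hσ, fun x y => (bandMap_comp hinv x y).symm,
    fun x => ?_⟩
  rw [trank, card_image_bandMap hinv, Fintype.card_fin]
end

section
/- Let p, q ≥ 2 and 1 ≤ r ≤ n be integers, and let l be the least nonnegative integer with r^l ≥ p. If there is an injective semigroup homomorphism from the p×q rectangular band into T_n whose image consists of transformations of rank r, then r + l ≤ n and π_r(n − l) ≥ q. -/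
/-!
Write `e = φ (i₀, j₀)`, `B` for its image (of size `r`) and `W` for the union of the images of
all `φ (i, j)`. The band identity `φ (i, j) ∘ φ (k, m) = φ (k, j)` shows that `φ (i, j₀)` maps
into `B` and is determined by its values off `W`, so `p ≤ r ^ |Wᶜ|` and hence `l ≤ |Wᶜ|`; and
that `φ (i₀, j)` is determined by its values on `B`, where it picks a point of each fibre
`W ∩ e⁻¹ b`, so `q` is at most the product of the fibre sizes. These `r` fibres partition `W`,
so enlarging one of them by `|Wᶜ| - l` gives a composition of `n - l` of length `r`.
-/

open Finset

theorem piComp_bddAbove (r N : ℕ) :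
    BddAbove {m | ∃ s : Fin r → ℕ, (∀ i, 1 ≤ s i) ∧ (∑ i, s i) = N ∧ m = ∏ i, s i} := by
  refine ⟨N ^ r, ?_⟩
  rintro m ⟨s, -, hsum, rfl⟩
  calc ∏ i, s i ≤ ∏ _i : Fin r, N :=
        prod_le_prod' fun i _ => hsum ▸ single_le_sum (fun _ _ => Nat.zero_le _) (mem_univ i)
    _ = N ^ r := by rw [prod_const, card_univ, Fintype.card_fin]

theorem prod_le_piComp_of_sum_le {r N : ℕ} (hr : 0 < r) {s : Fin r → ℕ} (hs : ∀ i, 1 ≤ s i)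
    (hsum : ∑ i, s i ≤ N) : ∏ i, s i ≤ piComp r N := by
  let i₀ : Fin r := ⟨0, hr⟩
  let s' : Fin r → ℕ := fun i => s i + if i = i₀ then N - ∑ i, s i else 0
  have hsum' : ∑ i, s' i = N := by
    simp only [s', sum_add_distrib, sum_ite_eq', mem_univ, if_true]
    omega
  calc ∏ i, s i ≤ ∏ i, s' i := prod_le_prod' fun i _ => Nat.le_add_right _ _
    _ ≤ piComp r N := le_csSup (piComp_bddAbove r N)
        ⟨s', fun i => (hs i).trans (Nat.le_add_right _ _), hsum', rfl⟩

theorem prod_le_piComp_card_of_sum_le {β : Type*} {B : Finset β} (hB : B.Nonempty) {s : β → ℕ}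
    {N : ℕ} (hs : ∀ b ∈ B, 1 ≤ s b) (hsum : ∑ b ∈ B, s b ≤ N) :
    ∏ b ∈ B, s b ≤ piComp B.card N := by
  let t : Fin B.card → ℕ := fun i => s (B.equivFin.symm i)
  have hprod : ∏ b ∈ B, s b = ∏ i, t i := by
    rw [← prod_coe_sort B, ← Equiv.prod_comp B.equivFin.symm]
  have hsum_eq : ∑ b ∈ B, s b = ∑ i, t i := by
    rw [← sum_coe_sort B, ← Equiv.sum_comp B.equivFin.symm]
  rw [hprod]
  exact prod_le_piComp_of_sum_le hB.card_pos (fun i => hs _ (B.equivFin.symm i).2)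
    (hsum_eq ▸ hsum)

section RectangularBand

variable {α ι κ : Type*} [Fintype α] [DecidableEq α] [Fintype ι] [Fintype κ]

def jointImage (φ : ι × κ → α → α) : Finset α :=
  univ.image fun x : (ι × κ) × α => φ x.1 x.2

variable {φ : ι × κ → α → α}

theorem apply_mem_jointImage (x : ι × κ) (a : α) : φ x a ∈ jointImage φ :=
  mem_image_of_mem (fun x : (ι × κ) × α => φ x.1 x.2) (mem_univ (x, a))

theorem image_subset_jointImage (x : ι × κ) : univ.image (φ x) ⊆ jointImage φ := by
  intro a ha
  obtain ⟨c, -, rfl⟩ := mem_image.1 ha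
  exact apply_mem_jointImage x c

theorem eq_of_eqOn_compl_jointImage (hφ : ∀ i j k m a, φ (i, j) (φ (k, m) a) = φ (k, j) a)
    {i i' : ι} {j : κ} (h : ∀ a ∉ jointImage φ, φ (i, j) a = φ (i', j) a) :
    φ (i, j) = φ (i', j) := by
  funext a
  by_cases ha : a ∈ jointImage φ
  · obtain ⟨⟨⟨k, m⟩, c⟩, -, rfl⟩ := mem_image.1 ha
    rw [hφ, hφ]
  · exact h a ha

theorem card_le_pow_card_compl_jointImage
    (hφ : ∀ i j k m a, φ (i, j) (φ (k, m) a) = φ (k, j) a) (hinj : Function.Injective φ)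
    (i₀ : ι) (j₀ : κ) :
    Fintype.card ι ≤ (univ.image (φ (i₀, j₀))).card ^ (jointImage φ)ᶜ.card := by
  have hmaps : ∀ i a, φ (i, j₀) a ∈ univ.image (φ (i₀, j₀)) := fun i a =>
    mem_image.2 ⟨φ (i, j₀) a, mem_univ _, hφ i₀ j₀ i j₀ a⟩
  let G : ι → (((jointImage φ)ᶜ : Finset α) → univ.image (φ (i₀, j₀))) := fun i a =>
    ⟨φ (i, j₀) a, hmaps i a⟩
  have hG : Function.Injective G := by
    intro i i' h
    have hrow : φ (i, j₀) = φ (i', j₀) := eq_of_eqOn_compl_jointImage hφ fun a ha =>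
      congrArg Subtype.val (congrFun h ⟨a, mem_compl.2 ha⟩)
    exact congrArg Prod.fst (hinj hrow)
  simpa only [Fintype.card_fun, Fintype.card_coe] using Fintype.card_le_of_injective G hG

theorem card_le_prod_card_fiber
    (hφ : ∀ i j k m a, φ (i, j) (φ (k, m) a) = φ (k, j) a) (hinj : Function.Injective φ)
    (i₀ : ι) (j₀ : κ) :
    Fintype.card κ ≤
      ∏ b ∈ univ.image (φ (i₀, j₀)), {a ∈ jointImage φ | φ (i₀, j₀) a = b}.card := by
  set B := univ.image (φ (i₀, j₀))
  have hmaps : ∀ j, ∀ b ∈ B, φ (i₀, j) b ∈ {a ∈ jointImage φ | φ (i₀, j₀) a = b} := by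
    intro j b hb
    obtain ⟨c, -, rfl⟩ := mem_image.1 hb
    exact mem_filter.2 ⟨apply_mem_jointImage _ _, by rw [hφ, hφ]⟩
  let F : κ → ((b : B) → {a ∈ jointImage φ | φ (i₀, j₀) a = b}) := fun j b =>
    ⟨φ (i₀, j) b, hmaps j b b.2⟩
  have hF : Function.Injective F := by
    intro j j' h
    -- `φ (i₀, j) = φ (i₀, j) ∘ φ (i₀, j₀)` is determined by its values on `B`.
    have hrow : φ (i₀, j) = φ (i₀, j') := by
      funext a
      have hb : φ (i₀, j₀) a ∈ B := mem_image_of_mem _ (mem_univ a)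
      have : φ (i₀, j) (φ (i₀, j₀) a) = φ (i₀, j') (φ (i₀, j₀) a) :=
        congrArg Subtype.val (congrFun h ⟨_, hb⟩)
      rwa [hφ, hφ] at this
    exact congrArg Prod.snd (hinj hrow)
  calc Fintype.card κ ≤ Fintype.card ((b : B) → {a ∈ jointImage φ | φ (i₀, j₀) a = b}) :=
        Fintype.card_le_of_injective F hF
    _ = _ := by rw [Fintype.card_pi, ← prod_coe_sort B]; simp only [Fintype.card_coe]

theorem self_mem_fiber (hφ : ∀ i j k m a, φ (i, j) (φ (k, m) a) = φ (k, j) a) {i₀ : ι} {j₀ : κ}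
    {b : α} (hb : b ∈ univ.image (φ (i₀, j₀))) : b ∈ {a ∈ jointImage φ | φ (i₀, j₀) a = b} := by
  obtain ⟨c, -, rfl⟩ := mem_image.1 hb
  exact mem_filter.2 ⟨apply_mem_jointImage _ _, hφ _ _ _ _ c⟩

theorem sum_card_fiber (x : ι × κ) :
    ∑ b ∈ univ.image (φ x), {a ∈ jointImage φ | φ x a = b}.card = (jointImage φ).card :=
  (card_eq_sum_card_fiberwise fun a _ => mem_image_of_mem (φ x) (mem_univ a)).symm

end RectangularBand

theorem rectangular_band_embedding_bound_general (n p q r l : ℕ)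
    (hp : 2 ≤ p) (hq : 2 ≤ q) (hr1 : 1 ≤ r)
    (hl : l = sInf {m | p ≤ r ^ m})
    (φ : Fin p × Fin q → (Fin n → Fin n))
    (hinj : Function.Injective φ)
    (hhom : ∀ x y : Fin p × Fin q, φ (x.1, y.2) = tMul (φ x) (φ y))
    (hrank : ∀ x, trank (φ x) = r) :
    r + l ≤ n ∧ q ≤ piComp r (n - l) := by
  have hφ : ∀ i j k m a, φ (i, j) (φ (k, m) a) = φ (k, j) a := fun i j k m a =>
    (congrFun (hhom (k, m) (i, j)) a).symm
  let i₀ : Fin p := ⟨0, by omega⟩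
  let j₀ : Fin q := ⟨0, by omega⟩
  have hB : (univ.image (φ (i₀, j₀))).card = r := hrank (i₀, j₀)
  have hl_le : l ≤ (jointImage φ)ᶜ.card := by
    have := card_le_pow_card_compl_jointImage hφ hinj i₀ j₀
    rw [hB, Fintype.card_fin] at this
    exact hl ▸ Nat.sInf_le this
  have hn : (jointImage φ)ᶜ.card + (jointImage φ).card = n := by
    rw [card_compl_add_card, Fintype.card_fin]
  have hrW : r ≤ (jointImage φ).card := hB ▸ card_le_card (image_subset_jointImage (i₀, j₀))
  refine ⟨by omega, ?_⟩
  calc q = Fintype.card (Fin q) := (Fintype.card_fin q).symm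
    _ ≤ ∏ b ∈ univ.image (φ (i₀, j₀)), {a ∈ jointImage φ | φ (i₀, j₀) a = b}.card :=
        card_le_prod_card_fiber hφ hinj i₀ j₀
    _ ≤ piComp r (n - l) := by
        rw [← hB]
        exact prod_le_piComp_card_of_sum_le (card_pos.1 (by omega))
          (fun b hb => card_pos.2 ⟨b, self_mem_fiber hφ hb⟩) (by rw [sum_card_fiber]; omega)

/-- If a `p × q` rectangular band (`p, q ≥ 2`) embeds in `T_n` via an injective semigroup
homomorphism whose image consists of rank-`r` transformations, then, with `l` the least
nonnegative integer with `r^l ≥ p`, we have `r + l ≤ n` and `π_r(n - l) ≥ q`. -/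
theorem rectangular_band_embedding_bound (n p q r l : ℕ)
    (hp : 2 ≤ p) (hq : 2 ≤ q) (hr1 : 1 ≤ r) (hrn : r ≤ n)
    (hl : l = sInf {m | p ≤ r ^ m})
    (φ : Fin p × Fin q → (Fin n → Fin n))
    (hinj : Function.Injective φ)
    (hhom : ∀ x y : Fin p × Fin q, φ (x.1, y.2) = tMul (φ x) (φ y))
    (hrank : ∀ x, trank (φ x) = r) :
    r + l ≤ n ∧ q ≤ piComp r (n - l) :=
  rectangular_band_embedding_bound_general n p q r l hp hq hr1 hl φ hinj hhom hrank
end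

section
/- Let G be a finite group, let p, q, n ≥ 1 be integers, and let B denote the p×q rectangular band. Then T_n contains a subsemigroup isomorphic to the direct product B × G if and only if there exists an integer 1 ≤ r ≤ n such that G embeds into the symmetric group on r letters and there is an injective semigroup homomorphism from B into T_n whose image consists of transformations of rank r. -/
open Finset Function

variable {ι κ G : Type*} {n : ℕ}

lemma trank_tMul_le_left (f g : Fin n → Fin n) : trank (tMul f g) ≤ trank f := by
  show (univ.image (g ∘ f)).card ≤ (univ.image f).card
  rw [← image_image]
  exact card_image_le

lemma trank_tMul_le_right (f g : Fin n → Fin n) : trank (tMul f g) ≤ trank g :=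
  card_le_card fun _ hx => by
    obtain ⟨y, -, rfl⟩ := mem_image.1 hx
    exact mem_image_of_mem g (mem_univ (f y))

lemma trank_le (f : Fin n → Fin n) : trank f ≤ n :=
  (card_le_univ _).trans_eq (Fintype.card_fin n)

lemma trank_pos (hn : 0 < n) (f : Fin n → Fin n) : 0 < trank f :=
  card_pos.2 (univ_nonempty_iff.2 ⟨⟨0, hn⟩⟩ |>.image f)

def IsTMulHom [Mul G] (f : G → (Fin n → Fin n)) : Prop :=
  ∀ g h, f (g * h) = tMul (f g) (f h)

def IsRectBandHom (φ : ι × κ → (Fin n → Fin n)) : Prop :=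
  ∀ x y : ι × κ, φ (x.1, y.2) = tMul (φ x) (φ y)

def IsRectGroupHom [Mul G] (ψ : (ι × κ) × G → (Fin n → Fin n)) : Prop :=
  ∀ x y : (ι × κ) × G, ψ ((x.1.1, y.1.2), x.2 * y.2) = tMul (ψ x) (ψ y)

namespace IsTMulHom

variable [Group G] {f : G → (Fin n → Fin n)}

lemma apply_apply (hf : IsTMulHom f) (g h : G) (x : Fin n) : f h (f g x) = f (g * h) x :=
  (congrFun (hf g h) x).symm

lemma apply_mem (hf : IsTMulHom f) (g : G) (x : Fin n) : f g x ∈ univ.image (f 1) := by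
  have h := mem_image_of_mem (f 1) (mem_univ (f g x))
  rwa [hf.apply_apply, mul_one] at h

lemma apply_one_of_mem (hf : IsTMulHom f) {s : Fin n} (hs : s ∈ univ.image (f 1)) :
    f 1 s = s := by
  obtain ⟨y, -, rfl⟩ := mem_image.1 hs
  rw [hf.apply_apply, mul_one]

/-- `tMul` composes on the right, so `g` has to act by `f g⁻¹`. -/
def toPerm (hf : IsTMulHom f) : G →* Equiv.Perm (univ.image (f 1)) :=
  MonoidHom.mk'
    (fun g =>
      { toFun := fun s => ⟨f g⁻¹ s, hf.apply_mem _ _⟩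
        invFun := fun s => ⟨f g s, hf.apply_mem _ _⟩
        left_inv := fun s => Subtype.ext <| by
          show f g (f g⁻¹ s) = s
          rw [hf.apply_apply, inv_mul_cancel, hf.apply_one_of_mem s.2]
        right_inv := fun s => Subtype.ext <| by
          show f g⁻¹ (f g s) = s
          rw [hf.apply_apply, mul_inv_cancel, hf.apply_one_of_mem s.2] })
    fun g h => Equiv.ext fun s => Subtype.ext <| by
      show f (g * h)⁻¹ s = f g⁻¹ (f h⁻¹ s)
      rw [hf.apply_apply, mul_inv_rev]

lemma toPerm_injective (hf : IsTMulHom f) (hinj : Injective f) : Injective hf.toPerm := by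
  refine (injective_iff_map_eq_one _).2 fun g hg => inv_eq_one.1 (hinj (funext fun x => ?_))
  have hfix : f g⁻¹ (f 1 x) = f 1 x :=
    congrArg Subtype.val (Equiv.ext_iff.1 hg ⟨f 1 x, mem_image_of_mem _ (mem_univ x)⟩)
  rw [← hfix, hf.apply_apply, one_mul]

lemma exists_injective_perm (hf : IsTMulHom f) (hinj : Injective f) :
    ∃ θ : G →* Equiv.Perm (Fin (trank (f 1))), Injective θ := by
  let α : univ.image (f 1) ≃ Fin (trank (f 1)) := Fintype.equivFinOfCardEq (Fintype.card_coe _)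
  exact ⟨α.permCongrHom.toMonoidHom.comp hf.toPerm,
    α.permCongrHom.injective.comp (hf.toPerm_injective hinj)⟩

end IsTMulHom

lemma exists_isTMulHom_of_perm [Group G] {e : Fin n → Fin n} (he : ∀ x, e (e x) = e x)
    (θ : G →* Equiv.Perm (Fin (trank e))) (hθ : Injective θ) :
    ∃ f : G → (Fin n → Fin n), IsTMulHom f ∧ Injective f ∧ f 1 = e := by
  let α : univ.image e ≃ Fin (trank e) := Fintype.equivFinOfCardEq (Fintype.card_coe _)
  let θ' := α.symm.permCongrHom.toMonoidHom.comp θ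
  have hθ' : Injective θ' := α.symm.permCongrHom.injective.comp hθ
  have hmem : ∀ x, e x ∈ univ.image e := fun x => mem_image_of_mem e (mem_univ x)
  have hfix : ∀ s : univ.image e, (⟨e s, hmem s⟩ : univ.image e) = s := fun s => by
    obtain ⟨y, -, hy⟩ := mem_image.1 s.2
    exact Subtype.ext (show e s = s by rw [← hy, he])
  refine ⟨fun g x => θ' g⁻¹ ⟨e x, hmem x⟩, fun g h => funext fun x => ?_, fun g h hgh => ?_,
    funext fun x => by simp⟩
  · show (θ' (g * h)⁻¹ ⟨e x, _⟩ : Fin n) = θ' h⁻¹ ⟨e (θ' g⁻¹ ⟨e x, _⟩), _⟩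
    rw [hfix, mul_inv_rev, map_mul, Equiv.Perm.mul_apply]
  · refine inv_injective (hθ' (Equiv.ext fun s => Subtype.ext ?_))
    simpa only [hfix] using congrFun hgh s

namespace IsRectGroupHom

variable [Group G] {ψ : (ι × κ) × G → (Fin n → Fin n)}

lemma congr_left (hψ : IsRectGroupHom ψ) {x y : (ι × κ) × G} (h : ψ x = ψ y)
    (c : (ι × κ) × G) :
    ψ ((c.1.1, x.1.2), c.2 * x.2) = ψ ((c.1.1, y.1.2), c.2 * y.2) := by
  rw [hψ, hψ, h]

lemma congr_right (hψ : IsRectGroupHom ψ) {x y : (ι × κ) × G} (h : ψ x = ψ y)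
    (d : (ι × κ) × G) :
    ψ ((x.1.1, d.1.2), x.2 * d.2) = ψ ((y.1.1, d.1.2), y.2 * d.2) := by
  rw [hψ, hψ, h]

lemma injective_iff (hψ : IsRectGroupHom ψ) (b₀ : ι × κ) :
    Injective ψ ↔ Injective (fun b => ψ (b, 1)) ∧ Injective (fun g => ψ (b₀, g)) := by
  refine ⟨fun h => ⟨h.comp (Prod.mk_left_injective 1), h.comp (Prod.mk_right_injective b₀)⟩,
    fun ⟨hB, hG⟩ => ?_⟩
  rintro ⟨⟨i, j⟩, g⟩ ⟨⟨k, l⟩, h⟩ hxy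
  obtain rfl : g = h := hG (by simpa using hψ.congr_right (hψ.congr_left hxy (b₀, 1)) (b₀, 1))
  obtain rfl : i = k := congrArg Prod.fst (hB (by simpa using hψ.congr_right hxy (b₀, g⁻¹)))
  obtain rfl : j = l := congrArg Prod.snd (hB (by simpa using hψ.congr_left hxy (b₀, g⁻¹)))
  rfl

lemma trank_le_trank (hψ : IsRectGroupHom ψ) (x y : (ι × κ) × G) :
    trank (ψ x) ≤ trank (ψ y) := by
  have hx : ψ x =
      tMul (tMul (ψ ((x.1.1, y.1.2), x.2 * y.2⁻¹)) (ψ y)) (ψ ((y.1.1, x.1.2), 1)) := by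
    rw [← hψ, ← hψ]
    simp
  rw [hx]
  exact (trank_tMul_le_left _ _).trans (trank_tMul_le_right _ _)

lemma trank_eq (hψ : IsRectGroupHom ψ) (x y : (ι × κ) × G) : trank (ψ x) = trank (ψ y) :=
  (hψ.trank_le_trank x y).antisymm (hψ.trank_le_trank y x)

lemma isRectBandHom_one (hψ : IsRectGroupHom ψ) : IsRectBandHom fun b => ψ (b, 1) :=
  fun x y => by simpa using hψ (x, 1) (y, 1)

lemma isTMulHom_at (hψ : IsRectGroupHom ψ) (b : ι × κ) : IsTMulHom fun g => ψ (b, g) :=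
  fun g h => hψ (b, g) (b, h)

end IsRectGroupHom

lemma IsRectBandHom.apply_apply {φ : ι × κ → (Fin n → Fin n)} (hφ : IsRectBandHom φ)
    (x y : ι × κ) (z : Fin n) : φ y (φ x z) = φ (x.1, y.2) z :=
  (congrFun (hφ x y) z).symm

def rectGroupMap (φ : ι × κ → (Fin n → Fin n)) (f : G → (Fin n → Fin n))
    (b₀ : ι × κ) : (ι × κ) × G → (Fin n → Fin n) :=
  fun x => tMul (tMul (φ (x.1.1, b₀.2)) (f x.2)) (φ (b₀.1, x.1.2))

section rectGroupMap

variable [Group G] {φ : ι × κ → (Fin n → Fin n)} {f : G → (Fin n → Fin n)} {b₀ : ι × κ}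

lemma IsRectBandHom.isRectGroupHom_rectGroupMap (hφ : IsRectBandHom φ) (hf : IsTMulHom f)
    (hf1 : f 1 = φ b₀) : IsRectGroupHom (rectGroupMap φ f b₀) := by
  rintro ⟨⟨i, j⟩, g⟩ ⟨⟨k, l⟩, h⟩
  funext z
  show φ (b₀.1, l) (f (g * h) (φ (i, b₀.2) z)) =
    φ (b₀.1, l) (f h (φ (k, b₀.2) (φ (b₀.1, j) (f g (φ (i, b₀.2) z)))))
  rw [hφ.apply_apply (b₀.1, j), ← hf1, hf.apply_apply, hf.apply_apply, one_mul]

lemma IsRectBandHom.rectGroupMap_one (hφ : IsRectBandHom φ) (hf1 : f 1 = φ b₀)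
    (b : ι × κ) : rectGroupMap φ f b₀ (b, 1) = φ b := by
  funext z
  show φ (b₀.1, b.2) (f 1 (φ (b.1, b₀.2) z)) = φ b z
  rw [hf1, hφ.apply_apply, hφ.apply_apply]

lemma IsTMulHom.rectGroupMap_base (hf : IsTMulHom f) (hf1 : f 1 = φ b₀) (g : G) :
    rectGroupMap φ f b₀ (b₀, g) = f g := by
  funext z
  show φ (b₀.1, b₀.2) (f g (φ (b₀.1, b₀.2) z)) = f g z
  rw [← hf1, hf.apply_apply, hf.apply_apply, one_mul, mul_one]

lemma IsRectBandHom.injective_rectGroupMap (hφ : IsRectBandHom φ) (hf : IsTMulHom f)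
    (hf1 : f 1 = φ b₀) (hφinj : Injective φ) (hfinj : Injective f) :
    Injective (rectGroupMap φ f b₀) := by
  refine ((hφ.isRectGroupHom_rectGroupMap hf hf1).injective_iff b₀).2 ⟨?_, ?_⟩
  · simpa only [hφ.rectGroupMap_one hf1] using hφinj
  · simpa only [hf.rectGroupMap_base hf1] using hfinj

end rectGroupMap

theorem rectangular_group_embeds_iff_general (G : Type) [Group G]
    (p q n : ℕ) (hp : 1 ≤ p) (hq : 1 ≤ q) (hn : 1 ≤ n) :
    (∃ ψ : (Fin p × Fin q) × G → (Fin n → Fin n), Function.Injective ψ ∧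
        ∀ x y : (Fin p × Fin q) × G, ψ ((x.1.1, y.1.2), x.2 * y.2) = tMul (ψ x) (ψ y))
      ↔ ∃ r, 1 ≤ r ∧ r ≤ n ∧
          (∃ θ : G →* Equiv.Perm (Fin r), Function.Injective θ) ∧
          (∃ φ : Fin p × Fin q → (Fin n → Fin n), Function.Injective φ ∧
            (∀ x y : Fin p × Fin q, φ (x.1, y.2) = tMul (φ x) (φ y)) ∧
            ∀ x, trank (φ x) = r) := by
  let b₀ : Fin p × Fin q := (⟨0, hp⟩, ⟨0, hq⟩)
  constructor
  · rintro ⟨ψ, hψinj, hψ : IsRectGroupHom ψ⟩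
    obtain ⟨hB, hG⟩ := (hψ.injective_iff b₀).1 hψinj
    exact ⟨trank (ψ (b₀, 1)), trank_pos hn _, trank_le _,
      (hψ.isTMulHom_at b₀).exists_injective_perm hG,
      _, hB, hψ.isRectBandHom_one, fun b => hψ.trank_eq _ _⟩
  · rintro ⟨r, -, -, ⟨θ, hθ⟩, φ, hφinj, hφ : IsRectBandHom φ, hφrank⟩
    obtain rfl := hφrank b₀
    obtain ⟨f, hf, hfinj, hf1⟩ := exists_isTMulHom_of_perm (hφ.apply_apply b₀ b₀) θ hθ
    exact ⟨_, hφ.injective_rectGroupMap hf hf1 hφinj hfinj,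
      hφ.isRectGroupHom_rectGroupMap hf hf1⟩

/-- For a finite group `G` and the `p × q` rectangular band `B`, the semigroup `T_n`
contains a copy of the rectangular group `B × G` iff there is `1 ≤ r ≤ n` such that `G`
embeds in the symmetric group on `r` letters and `B` embeds in `T_n` via an injective
semigroup homomorphism whose image consists of rank-`r` transformations. -/
theorem rectangular_group_embeds_iff (G : Type) [Group G] [Fintype G]
    (p q n : ℕ) (hp : 1 ≤ p) (hq : 1 ≤ q) (hn : 1 ≤ n) :
    (∃ ψ : (Fin p × Fin q) × G → (Fin n → Fin n), Function.Injective ψ ∧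
        ∀ x y : (Fin p × Fin q) × G, ψ ((x.1.1, y.1.2), x.2 * y.2) = tMul (ψ x) (ψ y))
      ↔ ∃ r, 1 ≤ r ∧ r ≤ n ∧
          (∃ θ : G →* Equiv.Perm (Fin r), Function.Injective θ) ∧
          (∃ φ : Fin p × Fin q → (Fin n → Fin n), Function.Injective φ ∧
            (∀ x y : Fin p × Fin q, φ (x.1, y.2) = tMul (φ x) (φ y)) ∧
            ∀ x, trank (φ x) = r) :=
  rectangular_group_embeds_iff_general G p q n hp hq hn
end

section
/- Let X be a set, let ζ : X → X satisfy ζ∘ζ = ζ, and let S be a set of self-maps of X. Then S is a null semigroup under the operation (f*g)(x) = g(f(x)) with zero element ζ (i.e. ζ ∈ S and f*g = ζ for all f, g ∈ S) if and only if ζ ∈ S and there exists a family of sets (W_z), indexed by the points z in the image of ζ, such that z ∈ W_z ⊆ ζ^{-1}(z) for each z in the image of ζ, and every f ∈ S satisfies f(ζ^{-1}(z)) ⊆ W_z and f(W_z) = {z} for all z in the image of ζ. -/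
/-!
If `S` is null with zero `ζ`, then `g ∘ ζ = ζ` and `ζ ∘ f = ζ` for `f, g ∈ S`; in particular `ζ` is
idempotent and fixes its image. Take `W z` to be the largest admissible set: the points of the
fibre `ζ⁻¹(z)` that every element of `S` sends to `z`. Conversely, given such a family, `f` sends
`x` into `W (ζ x)` and `g` then sends it to `ζ x`, so `g ∘ f = ζ`.
-/

open Set

variable {X : Type*} {ζ : X → X} {S : Set (X → X)}

theorem comp_eq_of_mapsTo_fiber {W : X → Set X} {f g : X → X}
    (hf : ∀ z ∈ range ζ, MapsTo f (ζ ⁻¹' {z}) (W z)) (hg : ∀ z ∈ range ζ, MapsTo g (W z) {z}) :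
    g ∘ f = ζ :=
  funext fun x => hg (ζ x) (mem_range_self x) (hf (ζ x) (mem_range_self x) rfl)

def absorbedFiber (ζ : X → X) (S : Set (X → X)) (z : X) : Set X :=
  {x | ζ x = z ∧ ∀ g ∈ S, g x = z}

theorem absorbedFiber_subset_preimage (z : X) : absorbedFiber ζ S z ⊆ ζ ⁻¹' {z} :=
  fun _ hx => hx.1

theorem mapsTo_absorbedFiber_singleton {g : X → X} (hg : g ∈ S) (z : X) :
    MapsTo g (absorbedFiber ζ S z) {z} :=
  fun _ hx => hx.2 g hg

theorem self_mem_absorbedFiber (hζS : ζ ∈ S) (hnull : ∀ f ∈ S, ∀ g ∈ S, g ∘ f = ζ)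
    {z : X} (hz : z ∈ range ζ) : z ∈ absorbedFiber ζ S z := by
  obtain ⟨y, rfl⟩ := hz
  exact ⟨congrFun (hnull ζ hζS ζ hζS) y, fun g hg => congrFun (hnull ζ hζS g hg) y⟩

theorem mapsTo_preimage_absorbedFiber (hζS : ζ ∈ S) (hnull : ∀ f ∈ S, ∀ g ∈ S, g ∘ f = ζ)
    {f : X → X} (hf : f ∈ S) (z : X) :
    MapsTo f (ζ ⁻¹' {z}) (absorbedFiber ζ S z) := fun x (hx : ζ x = z) =>
  ⟨(congrFun (hnull f hf ζ hζS) x).trans hx, fun g hg => (congrFun (hnull f hf g hg) x).trans hx⟩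

theorem image_absorbedFiber (hζS : ζ ∈ S) (hnull : ∀ f ∈ S, ∀ g ∈ S, g ∘ f = ζ)
    {f : X → X} (hf : f ∈ S) {z : X} (hz : z ∈ range ζ) :
    f '' absorbedFiber ζ S z = {z} :=
  (mapsTo_absorbedFiber_singleton hf z).image_subset.antisymm <|
    singleton_subset_iff.2
      ⟨z, self_mem_absorbedFiber hζS hnull hz, (self_mem_absorbedFiber hζS hnull hz).2 f hf⟩

theorem null_subsemigroup_iff_general {X : Type} (ζ : X → X)
    (S : Set (X → X)) :
    (ζ ∈ S ∧ ∀ f ∈ S, ∀ g ∈ S, (fun x => g (f x)) = ζ)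
    ↔ (ζ ∈ S ∧ ∃ W : X → Set X,
        (∀ z ∈ Set.range ζ, z ∈ W z ∧ W z ⊆ ζ ⁻¹' {z}) ∧
        ∀ f ∈ S, ∀ z ∈ Set.range ζ, f '' (ζ ⁻¹' {z}) ⊆ W z ∧ f '' (W z) = {z}) := by
  refine ⟨fun ⟨hζS, hnull⟩ => ⟨hζS, absorbedFiber ζ S, ?_, ?_⟩,
    fun ⟨hζS, W, _, hmaps⟩ => ⟨hζS, ?_⟩⟩
  · exact fun z hz => ⟨self_mem_absorbedFiber hζS hnull hz, absorbedFiber_subset_preimage z⟩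
  · exact fun f hf z hz => ⟨(mapsTo_preimage_absorbedFiber hζS hnull hf z).image_subset,
      image_absorbedFiber hζS hnull hf hz⟩
  · exact fun f hf g hg => comp_eq_of_mapsTo_fiber
      (fun z hz => mapsTo_iff_image_subset.2 (hmaps f hf z hz).1)
      (fun z hz => mapsTo_iff_image_subset.2 (hmaps g hg z hz).2.subset)

/-- Classification of null subsemigroups of the full transformation semigroup `T_X`
(with operation `(f * g) x = g (f x)`) having a prescribed idempotent zero `ζ`:
a set `S` of self-maps of `X` is a null semigroup with zero `ζ` iff `ζ ∈ S` and there is a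
family of sets `W z` (`z` ranging over the image of `ζ`) with `z ∈ W z ⊆ ζ⁻¹(z)`, such
that every `f ∈ S` maps `ζ⁻¹(z)` into `W z` and maps `W z` onto `{z}`. -/
theorem null_subsemigroup_iff {X : Type} (ζ : X → X) (hζ : ζ ∘ ζ = ζ)
    (S : Set (X → X)) :
    (ζ ∈ S ∧ ∀ f ∈ S, ∀ g ∈ S, (fun x => g (f x)) = ζ)
    ↔ (ζ ∈ S ∧ ∃ W : X → Set X,
        (∀ z ∈ Set.range ζ, z ∈ W z ∧ W z ⊆ ζ ⁻¹' {z}) ∧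
        ∀ f ∈ S, ∀ z ∈ Set.range ζ, f '' (ζ ⁻¹' {z}) ⊆ W z ∧ f '' (W z) = {z}) :=
  null_subsemigroup_iff_general ζ S
end

section
/- For integers 1 ≤ r ≤ n, the maximum cardinality of a subset S of T_n that is a null semigroup under the operation of T_n and whose zero element has rank r, equals ξ(n − r + 1). -/
/-- `xiFun n` is `ξ(n) = max { t^(n-t) : 1 ≤ t ≤ n }`. -/
def xiFun (n : ℕ) : ℕ := (Finset.Icc 1 n).sup fun t => t ^ (n - t)

open Finset

section NullFamily

variable {α : Type*} [Fintype α] [DecidableEq α] {z f g : α → α} {T : Finset α}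

/-- The largest null semigroup with zero `z` whose members all have image inside `T`. -/
def nullFamily (z : α → α) (T : Finset α) : Finset (α → α) :=
  Fintype.piFinset fun x => if x ∈ T then {z x} else {y ∈ T | z y = z x}

lemma mem_nullFamily :
    f ∈ nullFamily z T ↔ (∀ x ∈ T, f x = z x) ∧ ∀ x ∉ T, f x ∈ T ∧ z (f x) = z x := by
  simp only [nullFamily, Fintype.mem_piFinset]
  constructor
  · intro h
    refine ⟨fun x hx => ?_, fun x hx => ?_⟩ <;> simpa [hx] using h x
  · rintro ⟨hT, hTc⟩ x
    by_cases hx : x ∈ T <;> simp [hx, hT, hTc]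

lemma self_mem_nullFamily (hz : ∀ x, z (z x) = z x) (hzT : ∀ x, z x ∈ T) :
    z ∈ nullFamily z T :=
  mem_nullFamily.2 ⟨fun _ _ => rfl, fun x _ => ⟨hzT x, hz x⟩⟩

lemma comp_eq_of_mem_nullFamily (hz : ∀ x, z (z x) = z x) (hzT : ∀ x, z x ∈ T)
    (hf : f ∈ nullFamily z T) (hg : g ∈ nullFamily z T) : g ∘ f = z := by
  rw [mem_nullFamily] at hf hg
  funext x
  by_cases hx : x ∈ T
  · simp only [Function.comp_apply, hf.1 x hx, hg.1 _ (hzT x), hz]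
  · obtain ⟨hfxT, hzfx⟩ := hf.2 x hx
    simp only [Function.comp_apply, hg.1 _ hfxT, hzfx]

lemma subset_nullFamily {S : Finset (α → α)} (hzS : z ∈ S)
    (hS : ∀ f ∈ S, ∀ g ∈ S, g ∘ f = z) :
    S ⊆ nullFamily z (S.biUnion fun f => univ.image f) := by
  have hker : ∀ f ∈ S, ∀ x, z (f x) = z x := fun f hf => congrFun (hS f hf z hzS)
  intro f hf
  refine mem_nullFamily.2 ⟨fun y hy => ?_, fun x _ => ⟨?_, hker f hf x⟩⟩
  · obtain ⟨f', hf', x, rfl⟩ : ∃ f' ∈ S, ∃ x, f' x = y := by simpa using hy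
    exact (congrFun (hS f' hf' f hf) x).trans (hker f' hf' x).symm
  · exact mem_biUnion.2 ⟨f, hf, mem_image_of_mem f (mem_univ x)⟩

lemma card_nullFamily : #(nullFamily z T) = ∏ x ∈ Tᶜ, #{y ∈ T | z y = z x} := by
  simp only [nullFamily, Fintype.card_piFinset, apply_ite card, card_singleton]
  rw [prod_ite, prod_const_one, one_mul, filter_notMem_eq_sdiff]
  rfl

lemma card_filter_fiber_le (hz : ∀ x, z (z x) = z x) (hzT : ∀ x, z x ∈ T) (x : α) :
    #{y ∈ T | z y = z x} ≤ #T + 1 - #(univ.image z) := by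
  have hzx : z x ∈ univ.image z := mem_image_of_mem z (mem_univ x)
  have himT : univ.image z ⊆ T := image_subset_iff.2 fun x _ => hzT x
  have hsub : {y ∈ T | z y = z x} ⊆ T \ (univ.image z).erase (z x) := by
    intro y hy
    rw [mem_filter] at hy
    refine mem_sdiff.2 ⟨hy.1, fun hy' => (mem_erase.1 hy').1 ?_⟩
    obtain ⟨w, -, rfl⟩ := mem_image.1 (mem_erase.1 hy').2
    rw [← hy.2, hz]
  calc #{y ∈ T | z y = z x} ≤ #(T \ (univ.image z).erase (z x)) := card_le_card hsub
    _ = #T + 1 - #(univ.image z) := by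
      rw [card_sdiff_of_subset ((erase_subset _ _).trans himT), card_erase_of_mem hzx]
      have := card_le_card himT
      have := card_pos.2 ⟨_, hzx⟩
      omega

lemma card_nullFamily_le (hz : ∀ x, z (z x) = z x) (hzT : ∀ x, z x ∈ T) :
    #(nullFamily z T) ≤ (#T + 1 - #(univ.image z)) ^ (Fintype.card α - #T) := by
  rw [card_nullFamily, ← card_compl]
  exact prod_le_pow_card _ _ _ fun x _ => card_filter_fiber_le hz hzT x

end NullFamily

lemma pow_le_xiFun {m t : ℕ} (ht : 1 ≤ t) (htm : t ≤ m) : t ^ (m - t) ≤ xiFun m :=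
  le_sup (f := fun t => t ^ (m - t)) (mem_Icc.2 ⟨ht, htm⟩)

lemma exists_pow_eq_xiFun {m : ℕ} (hm : 1 ≤ m) :
    ∃ t, 1 ≤ t ∧ t ≤ m ∧ t ^ (m - t) = xiFun m := by
  obtain ⟨t, ht, heq⟩ := exists_mem_eq_sup (Icc 1 m) ⟨1, mem_Icc.2 ⟨le_rfl, hm⟩⟩
    fun t => t ^ (m - t)
  exact ⟨t, (mem_Icc.1 ht).1, (mem_Icc.1 ht).2, heq.symm⟩

section FinRank

variable {n : ℕ}

lemma trank_min (c : Fin n) : trank (min · c) = c + 1 := by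
  have : univ.image (min · c) = Iic c := by
    ext y
    simp only [mem_image, mem_univ, true_and, mem_Iic]
    exact ⟨fun ⟨x, hx⟩ => hx ▸ min_le_right x c, fun hy => ⟨y, min_eq_left hy⟩⟩
  rw [trank, this, Fin.card_Iic]

lemma card_nullFamily_min (c : Fin n) (t : ℕ) :
    #(nullFamily (min · c) {y | (y : ℕ) < c + t}) = t ^ (n - (c + t)) := by
  rw [card_nullFamily, prod_congr rfl fun x hx => ?_, prod_const, card_compl,
    Fin.card_filter_val_lt, Fintype.card_fin]
  · congr 1
    omega
  · have hx : c + t ≤ (x : ℕ) := by simpa using hx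
    have hxc : min x c = c := min_eq_right (Fin.le_def.2 (by omega))
    have hfiber : ({y | (y : ℕ) < c + t ∧ min y c = min x c} : Finset (Fin n)) =
        Ico c ⟨c + t, by omega⟩ := by
      ext y
      simp only [hxc, mem_filter, mem_univ, true_and, mem_Ico, min_eq_right_iff, Fin.le_def,
        Fin.lt_def]
      tauto
    rw [filter_filter, hfiber, Fin.card_Ico]
    exact Nat.add_sub_cancel_left _ _

lemma exists_null_card_eq {r t : ℕ} (hr1 : 1 ≤ r) (hrn : r ≤ n) (ht : 1 ≤ t)
    (htm : t ≤ n - r + 1) :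
    ∃ S : Finset (Fin n → Fin n), #S = t ^ (n - r + 1 - t) ∧
      ∃ z ∈ S, trank z = r ∧ ∀ f ∈ S, ∀ g ∈ S, tMul f g = z := by
  let c : Fin n := ⟨r - 1, by omega⟩
  have hc : (c : ℕ) = r - 1 := rfl
  have hz : ∀ x, min (min x c) c = min x c := fun x => min_eq_left (min_le_right x c)
  have hzT : ∀ x, min x c ∈ ({y | (y : ℕ) < c + t} : Finset (Fin n)) := fun x => by
    simp only [mem_filter, mem_univ, true_and]
    exact (Fin.le_def.1 (min_le_right x c)).trans_lt (by omega)
  refine ⟨_, ?_, _, self_mem_nullFamily hz hzT, ?_, fun f hf g hg =>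
    comp_eq_of_mem_nullFamily hz hzT hf hg⟩
  · rw [card_nullFamily_min]
    congr 1
    omega
  · rw [trank_min]
    omega

lemma card_le_xiFun_of_null {S : Finset (Fin n → Fin n)} {z : Fin n → Fin n} (hzS : z ∈ S)
    (hS : ∀ f ∈ S, ∀ g ∈ S, tMul f g = z) : #S ≤ xiFun (n - trank z + 1) := by
  set T := S.biUnion fun f => univ.image f
  have hzT : ∀ x, z x ∈ T := fun x => mem_biUnion.2 ⟨z, hzS, mem_image_of_mem z (mem_univ x)⟩
  have hrT : trank z ≤ #T := card_le_card (image_subset_iff.2 fun x _ => hzT x)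
  have hTn : #T ≤ n := (card_le_univ T).trans_eq (Fintype.card_fin n)
  calc #S ≤ #(nullFamily z T) := card_le_card (subset_nullFamily hzS hS)
    _ ≤ (#T + 1 - trank z) ^ (n - #T) := by
      simpa only [Fintype.card_fin, trank] using
        card_nullFamily_le (fun x => congrFun (hS z hzS z hzS) x) hzT
    _ = (#T + 1 - trank z) ^ (n - trank z + 1 - (#T + 1 - trank z)) := by
      congr 1
      omega
    _ ≤ xiFun (n - trank z + 1) := pow_le_xiFun (by omega) (by omega)

end FinRank

/-- For `1 ≤ r ≤ n`, the maximum cardinality of a null subsemigroup of `T_n` whose zero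
element has rank `r` equals `ξ(n - r + 1)`. -/
theorem max_null_subsemigroup_rank_r (n r : ℕ) (hr1 : 1 ≤ r) (hrn : r ≤ n) :
    IsGreatest {k | ∃ S : Finset (Fin n → Fin n), S.card = k ∧
        ∃ z ∈ S, trank z = r ∧ ∀ f ∈ S, ∀ g ∈ S, tMul f g = z}
      (xiFun (n - r + 1)) := by
  refine ⟨?_, ?_⟩
  · obtain ⟨t, ht, htm, hxi⟩ := exists_pow_eq_xiFun (m := n - r + 1) (by omega)
    exact hxi ▸ exists_null_card_eq hr1 hrn ht htm
  · rintro k ⟨S, rfl, z, hzS, rfl, hS⟩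
    exact card_le_xiFun_of_null hzS hS
end

section
/- For every integer n ≥ 3, the number of maximal null subsemigroups of T_n whose zero element has rank 1 equals n·(2^{n−1} − 2). (A null subsemigroup is maximal if it is not properly contained in another null subsemigroup of T_n.) -/
/-- A null subsemigroup of `T_n`: a set of transformations containing an element `z`
such that all products equal `z`. -/
def IsNullSub {n : ℕ} (S : Finset (Fin n → Fin n)) : Prop :=
  ∃ z ∈ S, ∀ f ∈ S, ∀ g ∈ S, tMul f g = z

/-!
If the zero of a null subsemigroup `S ⊆ T_n` is the constant map `const a` and `A` is the union
of the images of the elements of `S`, then every `f ∈ S` maps into `A` and sends `A` to `a`,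
because `f (g x) = (g * f) x = a`. All maps with these two properties form a null semigroup
`collapsing a A` with zero `const a`, so a maximal `S` is some `collapsing a A`. For `A = {a}` or
`A = univ` this is just `{const a}`, which is not maximal once `n ≥ 3`; for `{a} ⊊ A ⊊ univ` the
two-valued maps `x ↦ if x ∈ A then a else b` (with `b ∈ A`) show both that `collapsing a A` is
maximal and that it determines `(a, A)`. There are `n` choices of `a` and `2 ^ (n - 1) - 2` of `A`.
-/

open Finset Function

def pointedProperSubsets (α : Type*) [Fintype α] [DecidableEq α] : Finset (α × Finset α) :=
  {p | p.1 ∈ p.2 ∧ p.2 ≠ {p.1} ∧ p.2 ≠ univ}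

section
variable {α : Type*} [Fintype α] [DecidableEq α]

lemma card_filter_mem_eq_two_pow (a : α) :
    #{A : Finset α | a ∈ A} = 2 ^ (Fintype.card α - 1) := by
  have himage : univ.filter (fun A : Finset α => a ∈ A) = (univ.erase a).powerset.image (insert a) := by
    ext A
    simp only [mem_filter, mem_univ, true_and, mem_image, mem_powerset]
    refine ⟨fun ha => ⟨A.erase a, erase_subset_erase a (subset_univ A), insert_erase ha⟩, ?_⟩
    rintro ⟨B, -, rfl⟩
    exact mem_insert_self a B
  have hinj : Set.InjOn (insert a) ((univ.erase a).powerset : Set (Finset α)) := by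
    intro B hB B' hB' hBB'
    have hB : a ∉ B := fun h => by simpa using mem_powerset.1 hB h
    have hB' : a ∉ B' := fun h => by simpa using mem_powerset.1 hB' h
    rw [← erase_insert hB, ← erase_insert hB', hBB']
  rw [himage, card_image_of_injOn hinj, card_powerset, card_erase_of_mem (mem_univ a), card_univ]

lemma card_filter_mem_ne_singleton_ne_univ (h : 2 ≤ Fintype.card α) (a : α) :
    #{A : Finset α | a ∈ A ∧ A ≠ {a} ∧ A ≠ univ} = 2 ^ (Fintype.card α - 1) - 2 := by
  have hne : ({a} : Finset α) ≠ univ := fun h' => by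
    have := congrArg card h'
    rw [card_singleton, card_univ] at this
    omega
  have hsplit : univ.filter (fun A : Finset α => a ∈ A ∧ A ≠ {a} ∧ A ≠ univ) =
      univ.filter (fun A : Finset α => a ∈ A) \ {{a}, univ} := by
    ext A
    simp
  rw [hsplit, card_sdiff_of_subset (by intro A; aesop), card_filter_mem_eq_two_pow, card_pair hne]

lemma card_pointedProperSubsets (h : 2 ≤ Fintype.card α) :
    #(pointedProperSubsets α) = Fintype.card α * (2 ^ (Fintype.card α - 1) - 2) := by
  rw [pointedProperSubsets, card_filter, Fintype.sum_prod_type]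
  simp only [← card_filter, card_filter_mem_ne_singleton_ne_univ h, sum_const, card_univ,
    smul_eq_mul]

end

namespace TransformationSemigroup
variable {n : ℕ}

lemma trank_eq_one_iff {f : Fin n → Fin n} : trank f = 1 ↔ ∃ a, f = const (Fin n) a := by
  constructor
  · intro h
    obtain ⟨a, ha⟩ := card_eq_one.1 h
    exact ⟨a, funext fun x => mem_singleton.1 (ha ▸ mem_image_of_mem f (mem_univ x))⟩
  · rintro ⟨a, rfl⟩
    exact (congrArg card (image_const ⟨a, mem_univ a⟩ a)).trans (card_singleton a)

def collapsing (a : Fin n) (A : Finset (Fin n)) : Finset (Fin n → Fin n) :=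
  {f | (∀ x, f x ∈ A) ∧ ∀ x ∈ A, f x = a}

variable {a b : Fin n} {A B : Finset (Fin n)} {f : Fin n → Fin n}

lemma mem_collapsing : f ∈ collapsing a A ↔ (∀ x, f x ∈ A) ∧ ∀ x ∈ A, f x = a := by
  simp [collapsing]

lemma const_mem_collapsing (ha : a ∈ A) : const (Fin n) a ∈ collapsing a A :=
  mem_collapsing.2 ⟨fun _ => ha, fun _ _ => rfl⟩

lemma piecewise_mem_collapsing (ha : a ∈ A) (hb : b ∈ A) :
    A.piecewise (const (Fin n) a) (const (Fin n) b) ∈ collapsing a A := by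
  refine mem_collapsing.2 ⟨fun x => ?_, fun x hx => piecewise_eq_of_mem _ _ _ hx⟩
  by_cases hx : x ∈ A <;> simp [hx, ha, hb]

lemma collapsing_singleton : collapsing a {a} = {const (Fin n) a} := by
  ext f
  simpa [mem_collapsing, funext_iff] using fun h => h a

lemma collapsing_univ : collapsing a univ = {const (Fin n) a} := by
  ext f
  simp [mem_collapsing, funext_iff]

lemma tMul_of_mem_collapsing {g : Fin n → Fin n} (hf : f ∈ collapsing a A)
    (hg : g ∈ collapsing a A) : tMul f g = const (Fin n) a :=
  funext fun x => (mem_collapsing.1 hg).2 _ ((mem_collapsing.1 hf).1 x)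

lemma isNullSub_collapsing (ha : a ∈ A) : IsNullSub (collapsing a A) :=
  ⟨_, const_mem_collapsing ha, fun _ hf _ hg => tMul_of_mem_collapsing hf hg⟩

lemma collapsing_eq_of_subset_isNullSub (ha : a ∈ A) (hA : A ≠ {a}) (hA' : A ≠ univ)
    {T : Finset (Fin n → Fin n)} (hT : IsNullSub T) (hsub : collapsing a A ⊆ T) :
    collapsing a A = T := by
  obtain ⟨b, hb, hba⟩ : ∃ b ∈ A, b ≠ a := by
    by_contra! h
    exact hA (eq_singleton_iff_unique_mem.2 ⟨ha, h⟩)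
  obtain ⟨c, hc⟩ : ∃ c, c ∉ A := by simpa [eq_univ_iff_forall] using hA'
  obtain ⟨z, -, hz⟩ := hT
  obtain rfl : z = const (Fin n) a :=
    (hz _ (hsub (const_mem_collapsing ha)) _ (hsub (const_mem_collapsing ha))).symm
  refine hsub.antisymm fun g hg => mem_collapsing.2 ⟨fun x => ?_, fun y hy => ?_⟩
  · by_contra hgx
    have := congrFun (hz g hg _ (hsub (piecewise_mem_collapsing ha hb))) x
    exact hba (by simpa [tMul, hgx] using this)
  · have := congrFun (hz _ (hsub (piecewise_mem_collapsing ha hy)) g hg) c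
    simpa [tMul, hc] using this

lemma subset_of_collapsing_subset (ha : a ∈ A) {c : Fin n} (hc : c ∉ A)
    (h : collapsing a A ⊆ collapsing b B) : A ⊆ B := fun y hy => by
  simpa [hc] using (mem_collapsing.1 (h (piecewise_mem_collapsing ha hy))).1 c

lemma collapsing_injOn :
    Set.InjOn (fun p : Fin n × Finset (Fin n) => collapsing p.1 p.2)
      {p | p.1 ∈ p.2 ∧ p.2 ≠ univ} := by
  rintro ⟨a, A⟩ ⟨ha, hA⟩ ⟨b, B⟩ ⟨hb, hB⟩ (h : collapsing a A = collapsing b B)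
  obtain ⟨c, hc⟩ : ∃ c, c ∉ A := by simpa [eq_univ_iff_forall] using hA
  obtain ⟨d, hd⟩ : ∃ d, d ∉ B := by simpa [eq_univ_iff_forall] using hB
  obtain rfl : a = b := (mem_collapsing.1 (h ▸ const_mem_collapsing ha)).2 b hb
  exact Prod.ext rfl ((subset_of_collapsing_subset ha hc h.le).antisymm
    (subset_of_collapsing_subset hb hd h.ge))

lemma subset_collapsing_biUnion_image {S : Finset (Fin n → Fin n)}
    (hS : ∀ f ∈ S, ∀ g ∈ S, tMul f g = const (Fin n) a) :
    S ⊆ collapsing a (S.biUnion fun f => univ.image f) := by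
  intro f hf
  refine mem_collapsing.2 ⟨fun x => mem_biUnion.2 ⟨f, hf, mem_image_of_mem f (mem_univ x)⟩,
    fun y hy => ?_⟩
  obtain ⟨g, hg, hy⟩ := mem_biUnion.1 hy
  obtain ⟨x, -, rfl⟩ := mem_image.1 hy
  exact congrFun (hS g hg f hf) x

lemma exists_isNullSub_ssuperset_singleton_const (hn : 3 ≤ n) (a : Fin n) :
    ∃ T, IsNullSub T ∧ {const (Fin n) a} ⊂ T := by
  have : Nontrivial (Fin n) := Fin.nontrivial_iff_two_le.2 (by omega)
  obtain ⟨b, hba⟩ := exists_ne a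
  obtain ⟨c, -, hc⟩ := exists_mem_notMem_of_card_lt_card (s := {a, b}) (t := univ)
    (card_le_two.trans_lt (by rw [card_univ, Fintype.card_fin]; omega))
  have ha : a ∈ ({a, b} : Finset (Fin n)) := mem_insert_self a {b}
  have hb : b ∈ ({a, b} : Finset (Fin n)) := mem_insert_of_mem (mem_singleton_self b)
  refine ⟨collapsing a {a, b}, isNullSub_collapsing ha, Finset.ssubset_iff_subset_ne.2
    ⟨singleton_subset_iff.2 (const_mem_collapsing ha), fun h => hba ?_⟩⟩
  have := mem_singleton.1 (h ▸ piecewise_mem_collapsing ha hb)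
  simpa [hc] using congrFun this c

lemma eq_collapsing_of_maximal (hn : 3 ≤ n) {S : Finset (Fin n → Fin n)}
    (haS : const (Fin n) a ∈ S) (hS : ∀ f ∈ S, ∀ g ∈ S, tMul f g = const (Fin n) a)
    (hmax : ∀ T, IsNullSub T → S ⊆ T → S = T) :
    ∃ A, (a ∈ A ∧ A ≠ {a} ∧ A ≠ univ) ∧ S = collapsing a A := by
  set A := S.biUnion fun f => univ.image f
  have haA : a ∈ A := mem_biUnion.2 ⟨_, haS, mem_image_of_mem _ (mem_univ a)⟩
  have hSA : S = collapsing a A :=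
    hmax _ (isNullSub_collapsing haA) (subset_collapsing_biUnion_image hS)
  have hS_ne : S ≠ {const (Fin n) a} := fun h => by
    obtain ⟨T, hT, hST⟩ := exists_isNullSub_ssuperset_singleton_const hn a
    rw [← h] at hST
    exact hST.ne (hmax T hT hST.subset)
  refine ⟨A, ⟨haA, fun h => hS_ne ?_, fun h => hS_ne ?_⟩, hSA⟩
  · rw [hSA, h, collapsing_singleton]
  · rw [hSA, h, collapsing_univ]

lemma maximal_null_rank_one_iff (hn : 3 ≤ n) {S : Finset (Fin n → Fin n)} :
    ((∃ z ∈ S, trank z = 1 ∧ ∀ f ∈ S, ∀ g ∈ S, tMul f g = z) ∧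
        ∀ T : Finset (Fin n → Fin n), IsNullSub T → S ⊆ T → S = T) ↔
      S ∈ (pointedProperSubsets (Fin n)).image fun p => collapsing p.1 p.2 := by
  simp only [mem_image, pointedProperSubsets, mem_filter, mem_univ, true_and, Prod.exists]
  constructor
  · rintro ⟨⟨z, hzS, hz1, hz⟩, hmax⟩
    obtain ⟨a, rfl⟩ := trank_eq_one_iff.1 hz1
    obtain ⟨A, hA, rfl⟩ := eq_collapsing_of_maximal hn hzS hz hmax
    exact ⟨a, A, hA, rfl⟩
  · rintro ⟨a, A, ⟨ha, hA, hA'⟩, rfl⟩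
    exact ⟨⟨_, const_mem_collapsing ha, trank_eq_one_iff.2 ⟨a, rfl⟩,
      fun _ hf _ hg => tMul_of_mem_collapsing hf hg⟩,
      fun T hT hsub => collapsing_eq_of_subset_isNullSub ha hA hA' hT hsub⟩

end TransformationSemigroup

open TransformationSemigroup in
/-- For `n ≥ 3`, the number of maximal null subsemigroups of `T_n` whose zero element has
rank `1` equals `n * (2^(n-1) - 2)`. -/
theorem count_maximal_null_rank_one (n : ℕ) (hn : 3 ≤ n) :
    Set.ncard {S : Finset (Fin n → Fin n) |
        (∃ z ∈ S, trank z = 1 ∧ ∀ f ∈ S, ∀ g ∈ S, tMul f g = z) ∧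
        ∀ T : Finset (Fin n → Fin n), IsNullSub T → S ⊆ T → S = T}
      = n * (2 ^ (n - 1) - 2) := by
  simp only [maximal_null_rank_one_iff hn, Finset.setOfPred_mem, Set.ncard_coe_finset]
  have hinj : Set.InjOn (fun p : Fin n × Finset (Fin n) => collapsing p.1 p.2)
      (pointedProperSubsets (Fin n)) :=
    collapsing_injOn.mono fun p hp => by simp_all [pointedProperSubsets]
  rw [card_image_of_injOn hinj, card_pointedProperSubsets (by rw [Fintype.card_fin]; omega),
    Fintype.card_fin]
end

section
/- For every integer n ≥ 4, the maximum cardinality of a 3-nilpotent subsemigroup of T_n equals max{t^{n−t}·ξ(t) : 1 ≤ t ≤ n}. -/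
/-!
Let `S` be a set of self-maps of a finite set `α` in which every triple product `h ∘ g ∘ f`
is the same map. With `A` the union of the images of the maps in `S` and `B` the union of
their images on `A`, every map of `S` sends `α` into `A` and `A` into `B`, and all maps of `S`
agree on `B` (a point of `B` is `g (h w)`, so `f` sends it to `(f ∘ g ∘ h) w`). Hence `S` lies
in a "staircase" box of size `|A| ^ (|α| - |A|) * |B| ^ (|A| - |B|)`. Conversely, for a point
`p ∈ B ⊆ A`, the staircase of maps that are `p` on `B`, land in `B` on `A` and in `A` elsewhere
is a 3-nilpotent semigroup of exactly that size, which is not 2-nilpotent once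
`2 ≤ |B| < |A| < |α|`. For `n ≥ 4` the maximum of the sizes over `1 ≤ |B| ≤ |A| ≤ n` is
attained in that range.
-/

open Finset

/-- The product `f * g` of the transformation semigroup is `g ∘ f`, as in `tMul`. -/
def IsThreeNilpotent {α : Type*} (S : Finset (α → α)) : Prop :=
  (∀ f ∈ S, ∀ g ∈ S, g ∘ f ∈ S) ∧
    ∃ z ∈ S, (∀ f ∈ S, ∀ g ∈ S, ∀ h ∈ S, h ∘ g ∘ f = z) ∧
      ∃ f ∈ S, ∃ g ∈ S, g ∘ f ≠ z

section Staircase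

variable {α : Type*} [Fintype α] [DecidableEq α]

def staircase (c : α → α) (B A : Finset α) : Finset (α → α) :=
  Fintype.piFinset fun x => if x ∈ B then {c x} else if x ∈ A then B else A

theorem mem_staircase {c f : α → α} {B A : Finset α} (hBA : B ⊆ A) :
    f ∈ staircase c B A ↔
      (∀ x ∈ B, f x = c x) ∧ (∀ x ∈ A, x ∉ B → f x ∈ B) ∧
        ∀ x ∉ A, f x ∈ A := by
  simp only [staircase, Fintype.mem_piFinset]
  refine ⟨fun h => ⟨fun x hx => ?_, fun x hxA hxB => ?_, fun x hxA => ?_⟩, fun h x => ?_⟩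
  · simpa [hx] using h x
  · simpa [hxA, hxB] using h x
  · have := h x
    rwa [if_neg (mt (@hBA x) hxA), if_neg hxA] at this
  · split_ifs with hB hA
    · simp [h.1 x hB]
    · exact h.2.1 x hA hB
    · exact h.2.2 x hA

theorem card_staircase (c : α → α) {B A : Finset α} (hBA : B ⊆ A) :
    #(staircase c B A) = #A ^ (Fintype.card α - #A) * #B ^ (#A - #B) := by
  rw [staircase, Fintype.card_piFinset]
  simp only [apply_ite Finset.card, card_singleton]
  rw [prod_ite, prod_const_one, one_mul, prod_ite, prod_const, prod_const, filter_filter,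
    filter_filter]
  have hAB : ({x ∈ univ | x ∉ B ∧ x ∈ A} : Finset α) = A \ B := by
    ext
    simp [and_comm]
  have hA : ({x ∈ univ | x ∉ B ∧ x ∉ A} : Finset α) = univ \ A := by
    ext x
    simpa using mt (@hBA x)
  rw [hAB, hA, card_sdiff_of_subset hBA, card_sdiff_of_subset (subset_univ A), card_univ,
    mul_comm]

section Const

variable {p : α} {B A : Finset α}

theorem mapsTo_of_mem_staircase_const (hp : p ∈ B) (hBA : B ⊆ A) {f : α → α}
    (hf : f ∈ staircase (fun _ => p) B A) : Set.MapsTo f A B := by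
  intro x hx
  obtain ⟨hfB, hfA, -⟩ := (mem_staircase hBA).1 hf
  by_cases hxB : x ∈ B
  · rw [mem_coe, hfB x hxB]
    exact hp
  · exact hfA x hx hxB

theorem apply_mem_of_mem_staircase_const (hp : p ∈ B) (hBA : B ⊆ A) {f : α → α}
    (hf : f ∈ staircase (fun _ => p) B A) (x : α) : f x ∈ A := by
  by_cases hx : x ∈ A
  · exact hBA (mapsTo_of_mem_staircase_const hp hBA hf hx)
  · exact ((mem_staircase hBA).1 hf).2.2 x hx

theorem comp_mem_staircase_const (hp : p ∈ B) (hBA : B ⊆ A) {f g : α → α}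
    (hf : f ∈ staircase (fun _ => p) B A) (hg : g ∈ staircase (fun _ => p) B A) :
    g ∘ f ∈ staircase (fun _ => p) B A := by
  refine (mem_staircase hBA).2 ⟨fun x hx => ?_, fun x hx _ => ?_, fun x _ => ?_⟩
  · have hfx : f x = p := ((mem_staircase hBA).1 hf).1 x hx
    simpa [hfx] using ((mem_staircase hBA).1 hg).1 p hp
  · exact mapsTo_of_mem_staircase_const hp hBA hg
      (hBA (mapsTo_of_mem_staircase_const hp hBA hf hx))
  · exact hBA (mapsTo_of_mem_staircase_const hp hBA hg
      (apply_mem_of_mem_staircase_const hp hBA hf x))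

theorem comp_comp_eq_of_mem_staircase_const (hp : p ∈ B) (hBA : B ⊆ A) {f g h : α → α}
    (hf : f ∈ staircase (fun _ => p) B A) (hg : g ∈ staircase (fun _ => p) B A)
    (hh : h ∈ staircase (fun _ => p) B A) : h ∘ g ∘ f = fun _ => p :=
  funext fun x => ((mem_staircase hBA).1 hh).1 _
    (mapsTo_of_mem_staircase_const hp hBA hg (apply_mem_of_mem_staircase_const hp hBA hf x))

theorem isThreeNilpotent_staircase_const (hp : p ∈ B) (hBA : B ⊆ A) {q a x₀ : α}
    (hq : q ∈ B) (hqp : q ≠ p) (ha : a ∈ A) (haB : a ∉ B) (hx₀ : x₀ ∉ A) :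
    IsThreeNilpotent (staircase (fun _ => p) B A) := by
  refine ⟨fun f hf g hg => comp_mem_staircase_const hp hBA hf hg, fun _ => p, ?_,
    fun f hf g hg h hh => comp_comp_eq_of_mem_staircase_const hp hBA hf hg hh, ?_⟩
  · exact (mem_staircase hBA).2 ⟨fun _ _ => rfl, fun _ _ _ => hp, fun _ _ => hBA hp⟩
  have hx₀B : x₀ ∉ B := fun h => hx₀ (hBA h)
  refine ⟨Function.update (fun _ => p) x₀ a, (mem_staircase hBA).2 ⟨?_, ?_, ?_⟩,
    Function.update (fun _ => p) a q, (mem_staircase hBA).2 ⟨?_, ?_, ?_⟩, ?_⟩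
  · intro x hx
    rw [Function.update_of_ne (ne_of_mem_of_not_mem hx hx₀B)]
  · intro x hx _
    rw [Function.update_of_ne (ne_of_mem_of_not_mem hx hx₀)]
    exact hp
  · intro x _
    by_cases hx : x = x₀
    · subst hx; simpa using ha
    · simpa [hx] using hBA hp
  · intro x hx
    rw [Function.update_of_ne (ne_of_mem_of_not_mem hx haB)]
  · intro x _ _
    by_cases hx : x = a
    · subst hx; simpa using hq
    · simpa [hx] using hp
  · intro x hx
    rw [Function.update_of_ne (ne_of_mem_of_not_mem ha hx).symm]
    exact hBA hp
  · intro h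
    have := congrFun h x₀
    simp [hqp] at this

end Const

theorem exists_isThreeNilpotent_card_eq {s t : ℕ} (hs : 2 ≤ s) (hst : s < t)
    (ht : t < Fintype.card α) :
    ∃ S : Finset (α → α), IsThreeNilpotent S ∧
      #S = t ^ (Fintype.card α - t) * s ^ (t - s) := by
  obtain ⟨A, -, hA⟩ := exists_subset_card_eq (s := (univ : Finset α)) (by simpa using ht.le)
  obtain ⟨B, hBA, hB⟩ := exists_subset_card_eq (hA ▸ hst.le)
  obtain ⟨p, hp⟩ : B.Nonempty := card_pos.1 (by omega)
  obtain ⟨q, hq, hqp⟩ := exists_mem_ne (by omega : 1 < #B) p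
  obtain ⟨a, ha⟩ : (A \ B).Nonempty := card_pos.1 (by rw [card_sdiff_of_subset hBA]; omega)
  obtain ⟨x₀, hx₀⟩ : (univ \ A).Nonempty :=
    card_pos.1 (by rw [card_sdiff_of_subset (subset_univ A), card_univ]; omega)
  rw [mem_sdiff] at ha hx₀
  exact ⟨_, isThreeNilpotent_staircase_const hp hBA hq hqp ha.1 ha.2 hx₀.2,
    by rw [card_staircase _ hBA, hA, hB]⟩

theorem exists_card_le_of_comp_comp_eq [Nonempty α] {S : Finset (α → α)} (hS : S.Nonempty)
    {z : α → α} (hz : ∀ f ∈ S, ∀ g ∈ S, ∀ h ∈ S, h ∘ g ∘ f = z) :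
    ∃ t s, 1 ≤ s ∧ s ≤ t ∧ t ≤ Fintype.card α ∧
      #S ≤ t ^ (Fintype.card α - t) * s ^ (t - s) := by
  obtain ⟨f₀, hf₀⟩ := hS
  set A := S.biUnion fun f => univ.image f
  set B := S.biUnion fun g => A.image g
  have mem_A {f} (hf : f ∈ S) (x : α) : f x ∈ A :=
    mem_biUnion.2 ⟨f, hf, mem_image_of_mem f (mem_univ x)⟩
  have mem_B {g} (hg : g ∈ S) {x} (hx : x ∈ A) : g x ∈ B :=
    mem_biUnion.2 ⟨g, hg, mem_image_of_mem g hx⟩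
  have hBA : B ⊆ A := by
    intro x hx
    obtain ⟨g, hg, hx⟩ := mem_biUnion.1 hx
    obtain ⟨y, -, rfl⟩ := mem_image.1 hx
    exact mem_A hg y
  have eqOn_B {f f'} (hf : f ∈ S) (hf' : f' ∈ S) {x} (hx : x ∈ B) : f x = f' x := by
    obtain ⟨g, hg, hx⟩ := mem_biUnion.1 hx
    obtain ⟨y, hy, rfl⟩ := mem_image.1 hx
    obtain ⟨h, hh, hy⟩ := mem_biUnion.1 hy
    obtain ⟨w, -, rfl⟩ := mem_image.1 hy
    exact (congrFun (hz h hh g hg f hf) w).trans (congrFun (hz h hh g hg f' hf') w).symm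
  have hSsub : S ⊆ staircase f₀ B A := fun f hf => (mem_staircase hBA).2
    ⟨fun x hx => eqOn_B hf hf₀ hx, fun x hx _ => mem_B hf hx, fun x _ => mem_A hf x⟩
  refine ⟨#A, #B, ?_, card_le_card hBA, card_le_univ A, ?_⟩
  · exact card_pos.2 ⟨_, mem_B hf₀ (mem_A hf₀ (Classical.arbitrary α))⟩
  · exact (card_le_card hSsub).trans (card_staircase f₀ hBA).le

end Staircase

theorem pow_mul_pow_le_sup_xiFun {n t s : ℕ} (hs : 1 ≤ s) (hst : s ≤ t) (htn : t ≤ n) :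
    t ^ (n - t) * s ^ (t - s) ≤ (Icc 1 n).sup fun t => t ^ (n - t) * xiFun t :=
  calc t ^ (n - t) * s ^ (t - s) ≤ t ^ (n - t) * xiFun t :=
        Nat.mul_le_mul_left _ (le_sup (f := fun s => s ^ (t - s)) (mem_Icc.2 ⟨hs, hst⟩))
    _ ≤ _ := le_sup (f := fun t => t ^ (n - t) * xiFun t) (mem_Icc.2 ⟨hs.trans hst, htn⟩)

theorem exists_pow_mul_pow_eq_sup_xiFun {n : ℕ} (hn : 1 ≤ n) :
    ∃ t s, 1 ≤ s ∧ s ≤ t ∧ t ≤ n ∧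
      t ^ (n - t) * s ^ (t - s) = (Icc 1 n).sup fun t => t ^ (n - t) * xiFun t := by
  obtain ⟨t, ht, hsup⟩ :=
    exists_mem_eq_sup (Icc 1 n) (nonempty_Icc.2 hn) fun t => t ^ (n - t) * xiFun t
  obtain ⟨ht1, htn⟩ := mem_Icc.1 ht
  obtain ⟨s, hs, hxi⟩ := exists_mem_eq_sup (Icc 1 t) (nonempty_Icc.2 ht1) fun s => s ^ (t - s)
  obtain ⟨hs1, hst⟩ := mem_Icc.1 hs
  exact ⟨t, s, hs1, hst, htn, by rw [hsup, xiFun, hxi]⟩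

theorem exists_le_pow_mul_pow_of_pow {n t : ℕ} (hn : 4 ≤ n) (ht : 1 ≤ t) (htn : t ≤ n) :
    ∃ t' s', 2 ≤ s' ∧ s' < t' ∧ t' < n ∧
      t ^ (n - t) ≤ t' ^ (n - t') * s' ^ (t' - s') := by
  by_cases hmid : 3 ≤ t ∧ t < n
  · exact ⟨t, 2, le_rfl, hmid.1, hmid.2, Nat.le_mul_of_pos_right _ (by positivity)⟩
  refine ⟨3, 2, le_rfl, by norm_num, by omega, ?_⟩
  rcases (by omega : t = 2 ∨ t = 1 ∨ t = n) with rfl | rfl | rfl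
  · calc 2 ^ (n - 2) = 2 ^ (n - 3) * 2 := by rw [← pow_succ]; congr 1; omega
      _ ≤ 3 ^ (n - 3) * 2 ^ (3 - 2) := by gcongr <;> norm_num
  all_goals simpa using Nat.one_le_iff_ne_zero.2 (by positivity)

theorem exists_le_pow_mul_pow {n t s : ℕ} (hn : 4 ≤ n) (hs : 1 ≤ s) (hst : s ≤ t)
    (htn : t ≤ n) :
    ∃ t' s', 2 ≤ s' ∧ s' < t' ∧ t' < n ∧
      t ^ (n - t) * s ^ (t - s) ≤ t' ^ (n - t') * s' ^ (t' - s') := by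
  rcases (by omega : s = 1 ∨ s = t ∨ t = n ∨ (2 ≤ s ∧ s < t ∧ t < n)) with
    rfl | rfl | rfl | ⟨hs2, hst', htn'⟩
  · simpa using exists_le_pow_mul_pow_of_pow hn (hs.trans hst) htn
  · simpa using exists_le_pow_mul_pow_of_pow hn hs htn
  · simpa using exists_le_pow_mul_pow_of_pow hn hs hst
  · exact ⟨t, s, hs2, hst', htn', le_rfl⟩

theorem exists_pow_mul_pow_eq_sup_xiFun_of_four_le {n : ℕ} (hn : 4 ≤ n) :
    ∃ t s, 2 ≤ s ∧ s < t ∧ t < n ∧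
      t ^ (n - t) * s ^ (t - s) = (Icc 1 n).sup fun t => t ^ (n - t) * xiFun t := by
  obtain ⟨t₀, s₀, hs₀, hst₀, htn₀, hsup⟩ := exists_pow_mul_pow_eq_sup_xiFun (n := n) (by omega)
  obtain ⟨t, s, hs, hst, htn, hle⟩ := exists_le_pow_mul_pow hn hs₀ hst₀ htn₀
  exact ⟨t, s, hs, hst, htn,
    (pow_mul_pow_le_sup_xiFun (by omega) hst.le htn.le).antisymm (hsup ▸ hle)⟩

/-- For `n ≥ 4`, the maximum cardinality of a `3`-nilpotent subsemigroup of `T_n`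
(a multiplicatively closed subset having an element `z` with `x*y*w = z` for all members
`x, y, w` but `x*y ≠ z` for some members `x, y`) equals
`max { t^(n-t) * ξ(t) : 1 ≤ t ≤ n }`. -/
theorem max_three_nilpotent_subsemigroup (n : ℕ) (hn : 4 ≤ n) :
    IsGreatest {k | ∃ S : Finset (Fin n → Fin n), S.card = k ∧
        (∀ f ∈ S, ∀ g ∈ S, tMul f g ∈ S) ∧
        ∃ z ∈ S, (∀ f ∈ S, ∀ g ∈ S, ∀ h ∈ S, tMul (tMul f g) h = z) ∧
          ∃ f ∈ S, ∃ g ∈ S, tMul f g ≠ z}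
      ((Finset.Icc 1 n).sup fun t => t ^ (n - t) * xiFun t) := by
  refine ⟨?_, ?_⟩
  · obtain ⟨t, s, hs, hst, htn, hsup⟩ := exists_pow_mul_pow_eq_sup_xiFun_of_four_le hn
    obtain ⟨S, hS, hcard⟩ :=
      exists_isThreeNilpotent_card_eq (α := Fin n) hs hst (by rwa [Fintype.card_fin])
    exact ⟨S, by rw [hcard, Fintype.card_fin, hsup], hS⟩
  · rintro k ⟨S, rfl, -, z, hz, hS, -⟩
    have : Nonempty (Fin n) := ⟨⟨0, by omega⟩⟩
    obtain ⟨t, s, hs, hst, htn, hcard⟩ := exists_card_le_of_comp_comp_eq ⟨z, hz⟩ hS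
    rw [Fintype.card_fin] at htn hcard
    exact hcard.trans (pow_mul_pow_le_sup_xiFun hs hst htn)
end

section
/- For integers m, p, q ≥ 1, T_m contains a subsemigroup isomorphic to a p×q right null semigroup if and only if there exist an integer r ≥ 1 and positive integers s_1,…,s_r and t_1,…,t_r with t_i ≤ s_i for all i, s_1 + ⋯ + s_r = m, t_1⋯t_r ≥ p, and t_1^{s_1−t_1}⋯t_r^{s_r−t_r} ≥ q. -/
open Finset Function

namespace RightNullSemigroup

variable {P Q X Y ι : Type*}

/-- `φ` is a faithful representation of the right null semigroup `P × Q`, where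
`(a, b) * (c, d) = (c, q₀)`; transformations compose left to right, as in `tMul`. -/
def IsEmbedding (q₀ : Q) (φ : P × Q → X → X) : Prop :=
  Injective φ ∧ ∀ x y : P × Q, φ (y.1, q₀) = φ y ∘ φ x

def IsBlockProfile [Fintype ι] (m p q : ℕ) (s t : ι → ℕ) : Prop :=
  (∀ i, 1 ≤ t i) ∧ (∀ i, t i ≤ s i) ∧ ∑ i, s i = m ∧ p ≤ ∏ i, t i ∧
    q ≤ ∏ i, t i ^ (s i - t i)

theorem IsBlockProfile.exists_fin [Fintype ι] [Nonempty ι] {m p q : ℕ} {s t : ι → ℕ}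
    (h : IsBlockProfile m p q s t) :
    ∃ r, 1 ≤ r ∧ ∃ s t : Fin r → ℕ, IsBlockProfile m p q s t := by
  obtain ⟨ht, hts, hs, hp, hq⟩ := h
  let E := (Fintype.equivFin ι).symm
  refine ⟨Fintype.card ι, Fintype.card_pos, s ∘ E, t ∘ E, fun i => ht _, fun i => hts _,
    ?_, ?_, ?_⟩
  · exact (E.sum_comp s).trans hs
  · exact hp.trans_eq (E.prod_comp t).symm
  · exact hq.trans_eq (E.prod_comp fun i => t i ^ (s i - t i)).symm

theorem IsEmbedding.arrowCongr {q₀ : Q} {φ : P × Q → X → X} (hφ : IsEmbedding q₀ φ)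
    (E : X ≃ Y) : IsEmbedding q₀ (E.arrowCongr E ∘ φ) := by
  refine ⟨(E.arrowCongr E).injective.comp hφ.1, fun x y => ?_⟩
  simp only [comp_apply, hφ.2 x y, Equiv.arrowCongr_comp E E E]

section Blocks

variable [Fintype X] [DecidableEq X]

def block (e : X → X) (a : X) : Finset X := univ.filter fun x => e x = a

theorem mem_block {e : X → X} {a x : X} : x ∈ block e a ↔ e x = a := by
  simp [block]

theorem sum_card_block {e : X → X} (he : ∀ x, e (e x) = e x) :
    ∑ a : fixedPoints e, #(block e a) = Fintype.card X := by
  let f : X → fixedPoints e := fun x => ⟨e x, he x⟩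
  rw [← Fintype.card_congr (Equiv.sigmaFiberEquiv f), Fintype.card_sigma]
  refine sum_congr rfl fun a _ => ?_
  rw [Fintype.card_subtype]
  congr 1
  ext x
  simp [f, block, Subtype.ext_iff]

variable (e : X → X) (R : Finset X)

theorem one_le_card_block_inter (hR : ∀ x, e x ∈ R) (a : fixedPoints e) :
    1 ≤ #(block e a ∩ R) :=
  card_pos.2 ⟨a, mem_inter.2 ⟨mem_block.2 a.2, a.2 ▸ hR a⟩⟩

theorem card_le_prod_card_block_inter [Fintype P] (he : ∀ x, e (e x) = e x)
    (F : P → X → X) (hF : Injective F) (hFe : ∀ c x, F c (e x) = F c x)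
    (heF : ∀ c x, e (F c x) = e x) (hFR : ∀ c x, F c x ∈ R) :
    Fintype.card P ≤ ∏ a : fixedPoints e, #(block e a ∩ R) := by
  let encode : P → ∀ a : fixedPoints e, ↥(block e a ∩ R) := fun c a =>
    ⟨F c a, mem_inter.2 ⟨mem_block.2 ((heF c a).trans a.2), hFR c a⟩⟩
  have hencode : Injective encode := by
    refine fun c c' h => hF (funext fun x => ?_)
    rw [← hFe c, ← hFe c']
    exact congrArg Subtype.val (congrFun h ⟨e x, he x⟩)
  simpa only [Fintype.card_pi, Fintype.card_coe] using Fintype.card_le_of_injective encode hencode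

theorem card_le_prod_pow_card_block_inter [Fintype Q] (he : ∀ x, e (e x) = e x)
    (G : Q → X → X) (hG : Injective G) (heG : ∀ d x, e (G d x) = e x)
    (hGR : ∀ d x, G d x ∈ R) (hG_eqOn : ∀ d d', ∀ x ∈ R, G d x = G d' x) :
    Fintype.card Q ≤
      ∏ a : fixedPoints e, #(block e a ∩ R) ^ (#(block e a) - #(block e a ∩ R)) := by
  let encode : Q → ∀ a : fixedPoints e, ↥(block e a \ R) → ↥(block e a ∩ R) := fun d a x =>
    ⟨G d x, mem_inter.2 ⟨mem_block.2 ((heG d x).trans (mem_block.1 (mem_sdiff.1 x.2).1)),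
      hGR d x⟩⟩
  have hencode : Injective encode := by
    refine fun d d' h => hG (funext fun x => ?_)
    by_cases hx : x ∈ R
    · exact hG_eqOn d d' x hx
    · exact congrArg Subtype.val
        (congrFun (congrFun h ⟨e x, he x⟩) ⟨x, mem_sdiff.2 ⟨mem_block.2 rfl, hx⟩⟩)
  have hcard : ∀ a, #(block e a \ R) = #(block e a) - #(block e a ∩ R) := fun a => by
    rw [card_sdiff, inter_comm]
  have hQ := Fintype.card_le_of_injective encode hencode
  rw [Fintype.card_pi] at hQ
  simpa only [Fintype.card_fun, Fintype.card_coe, hcard] using hQ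

end Blocks

namespace IsEmbedding

variable [Fintype P] [Fintype Q] [Fintype X] [DecidableEq X] {q₀ : Q} {φ : P × Q → X → X}

theorem isBlockProfile (hφ : IsEmbedding q₀ φ) (p₀ : P) :
    IsBlockProfile (Fintype.card X) (Fintype.card P) (Fintype.card Q)
      (fun a : fixedPoints (φ (p₀, q₀)) => #(block (φ (p₀, q₀)) a))
      (fun a => #(block (φ (p₀, q₀)) a ∩ univ.image (uncurry φ))) := by
  obtain ⟨hinj, hlaw⟩ := hφ
  set e := φ (p₀, q₀)
  set R := univ.image (uncurry φ)
  have hR : ∀ z w, φ z w ∈ R := fun z w => mem_image_of_mem (uncurry φ) (mem_univ (z, w))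
  have heφ : ∀ z w, e (φ z w) = e w := fun z w => (congrFun (hlaw z (p₀, q₀)) w).symm
  have he : ∀ w, e (e w) = e w := heφ (p₀, q₀)
  have hφe : ∀ c w, φ (c, q₀) (e w) = φ (c, q₀) w := fun c w =>
    (congrFun (hlaw (p₀, q₀) (c, q₀)) w).symm
  have hφ_eqOn : ∀ d d', ∀ x ∈ R, φ (p₀, d) x = φ (p₀, d') x := by
    intro d d' x hx
    obtain ⟨⟨z, w⟩, -, rfl⟩ := mem_image.1 hx
    exact (congrFun (hlaw z (p₀, d)) w).symm.trans (congrFun (hlaw z (p₀, d')) w)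
  exact ⟨one_le_card_block_inter e R (hR _), fun a => card_le_card inter_subset_left,
    sum_card_block he,
    card_le_prod_card_block_inter e R he _ (hinj.comp (Prod.mk_left_injective q₀)) hφe
      (fun _ => heφ _) (fun _ => hR _),
    card_le_prod_pow_card_block_inter e R he _ (hinj.comp (Prod.mk_right_injective p₀))
      (fun _ => heφ _) (fun _ => hR _) hφ_eqOn⟩

theorem exists_isBlockProfile [Nonempty P] [Nonempty X] (hφ : IsEmbedding q₀ φ) :
    ∃ r, 1 ≤ r ∧ ∃ s t : Fin r → ℕ,
      IsBlockProfile (Fintype.card X) (Fintype.card P) (Fintype.card Q) s t := by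
  obtain ⟨p₀⟩ := ‹Nonempty P›
  obtain ⟨x⟩ := ‹Nonempty X›
  have : Nonempty (fixedPoints (φ (p₀, q₀))) :=
    ⟨⟨φ (p₀, q₀) x, (congrFun (hφ.2 (p₀, q₀) (p₀, q₀)) x).symm⟩⟩
  exact (hφ.isBlockProfile p₀).exists_fin

end IsEmbedding

section Construction

variable {C D : ι → Type*} [∀ i, AddGroup (C i)]

def blockMap (a : ∀ i, C i) (b : ∀ i, D i → C i) : (Σ i, C i ⊕ D i) → Σ i, C i ⊕ D i
  | ⟨i, .inl _⟩ => ⟨i, .inl (a i)⟩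
  | ⟨i, .inr w⟩ => ⟨i, .inl (a i + b i w)⟩

theorem blockMap_comp_blockMap (a a' : ∀ i, C i) (b b' : ∀ i, D i → C i) :
    blockMap a' b' ∘ blockMap a b = blockMap a' 0 := by
  funext ⟨i, x⟩
  cases x <;> simp [blockMap]

theorem blockMap_injective :
    Injective fun ab : (∀ i, C i) × (∀ i, D i → C i) => blockMap ab.1 ab.2 := by
  rintro ⟨a, b⟩ ⟨a', b'⟩ h
  change blockMap a b = blockMap a' b' at h
  have ha : a = a' := funext fun i => by simpa [blockMap] using congrFun h ⟨i, .inl 0⟩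
  subst ha
  have hb : b = b' := funext fun i => funext fun w => by
    simpa [blockMap] using congrFun h ⟨i, .inr w⟩
  rw [hb]

theorem isEmbedding_blockMap {α : P → ∀ i, C i} {β : Q → ∀ i, D i → C i} (hα : Injective α)
    (hβ : Injective β) (q₀ : Q) :
    IsEmbedding q₀ fun z : P × Q => blockMap (α z.1) (β z.2 - β q₀) := by
  refine ⟨blockMap_injective.comp (hα.prodMap (sub_left_injective.comp hβ)),
    fun x y => ?_⟩
  simp only [sub_self, blockMap_comp_blockMap]

end Construction

theorem IsBlockProfile.exists_isEmbedding [Fintype ι] [Fintype P] [Fintype Q] [Fintype X]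
    {s t : ι → ℕ} (h : IsBlockProfile (Fintype.card X) (Fintype.card P) (Fintype.card Q) s t)
    (q₀ : Q) : ∃ φ : P × Q → X → X, IsEmbedding q₀ φ := by
  classical
  obtain ⟨ht, hts, hs, hp, hq⟩ := h
  have : ∀ i, NeZero (t i) := fun i => ⟨Nat.one_le_iff_ne_zero.1 (ht i)⟩
  obtain ⟨α⟩ : Nonempty (P ↪ ∀ i, Fin (t i)) :=
    Function.Embedding.nonempty_of_card_le (by simpa [Fintype.card_pi] using hp)
  obtain ⟨β⟩ : Nonempty (Q ↪ ∀ i, Fin (s i - t i) → Fin (t i)) :=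
    Function.Embedding.nonempty_of_card_le (by simpa [Fintype.card_pi] using hq)
  have hcard : Fintype.card (Σ i, Fin (t i) ⊕ Fin (s i - t i)) = Fintype.card X := by
    simp only [Fintype.card_sigma, Fintype.card_sum, Fintype.card_fin, ← hs]
    exact sum_congr rfl fun i _ => Nat.add_sub_cancel' (hts i)
  exact ⟨_, (isEmbedding_blockMap α.injective β.injective q₀).arrowCongr
    (Fintype.equivOfCardEq hcard)⟩

end RightNullSemigroup

/-- `T_m` contains a `p × q` right null semigroup (the direct product of a `p`-element
right zero semigroup and a `q`-element null semigroup, i.e. `Fin p × Fin q` with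
multiplication `(a,b)·(c,d) = (c, 0)`) iff there are compositions `σ = (s₁,…,s_r)` of `m`
and `τ = (t₁,…,t_r)` with `τ ≼ σ`, `∏τ ≥ p` and `∏ tᵢ^(sᵢ-tᵢ) ≥ q`. -/
theorem right_null_in_Tm_iff (m p q : ℕ) (hm : 1 ≤ m) (hp : 1 ≤ p) (hq : 1 ≤ q) :
    (∃ φ : Fin p × Fin q → (Fin m → Fin m), Function.Injective φ ∧
        ∀ x y : Fin p × Fin q, φ (y.1, (⟨0, hq⟩ : Fin q)) = tMul (φ x) (φ y))
      ↔ ∃ r : ℕ, 1 ≤ r ∧ ∃ s t : Fin r → ℕ,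
          (∀ i, 1 ≤ t i) ∧ (∀ i, t i ≤ s i) ∧ (∑ i, s i) = m ∧
          p ≤ ∏ i, t i ∧ q ≤ ∏ i, (t i) ^ (s i - t i) := by
  change (∃ φ, RightNullSemigroup.IsEmbedding (⟨0, hq⟩ : Fin q) φ) ↔
    ∃ r, 1 ≤ r ∧ ∃ s t : Fin r → ℕ, RightNullSemigroup.IsBlockProfile m p q s t
  have : Nonempty (Fin m) := ⟨⟨0, hm⟩⟩
  have : Nonempty (Fin p) := ⟨⟨0, hp⟩⟩
  constructor
  · rintro ⟨φ, hφ⟩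
    simpa only [Fintype.card_fin] using hφ.exists_isBlockProfile
  · rintro ⟨r, -, s, t, h⟩
    exact RightNullSemigroup.IsBlockProfile.exists_isEmbedding
      (by simpa only [Fintype.card_fin]) _
end

section
/- For integers p, q ≥ 2, the minimum transformation degree of a p×q right null semigroup equals min{2A + 3B + C + D : A, B, C, D integers, 0 ≤ A ≤ 2, B ≥ 0, D ≥ 0, C ≥ 2, 2^A·3^B·C ≥ p, and C^D ≥ q}. -/
open Finset Function

theorem exists_le_two_pow_mul_three_pow (m : ℕ) :
    ∃ a b : ℕ, m ≤ 2 ^ a * 3 ^ b ∧ 2 * a + 3 * b ≤ m := by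
  induction m using Nat.strong_induction_on with
  | _ m ih =>
    by_cases hm : m ≤ 4
    · interval_cases m
      exacts [⟨0, 0, by norm_num⟩, ⟨0, 0, by norm_num⟩, ⟨1, 0, by norm_num⟩,
        ⟨0, 1, by norm_num⟩, ⟨2, 0, by norm_num⟩]
    · obtain ⟨a, b, hle, hcost⟩ := ih (m - 3) (by omega)
      refine ⟨a, b + 1, ?_, by omega⟩
      rw [pow_succ, ← mul_assoc]
      omega

theorem Finset.exists_prod_le_two_pow_mul_three_pow {ι : Type*} (s : Finset ι) (u : ι → ℕ) :
    ∃ a b : ℕ, ∏ i ∈ s, u i ≤ 2 ^ a * 3 ^ b ∧ 2 * a + 3 * b ≤ ∑ i ∈ s, u i := by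
  classical
  induction s using Finset.induction_on with
  | empty => exact ⟨0, 0, by simp⟩
  | insert i s hi ih =>
    obtain ⟨a₁, b₁, hle₁, hcost₁⟩ := exists_le_two_pow_mul_three_pow (u i)
    obtain ⟨a₂, b₂, hle₂, hcost₂⟩ := ih
    refine ⟨a₁ + a₂, b₁ + b₂, ?_, ?_⟩
    · calc ∏ j ∈ insert i s, u j = u i * ∏ j ∈ s, u j := prod_insert hi
        _ ≤ 2 ^ a₁ * 3 ^ b₁ * (2 ^ a₂ * 3 ^ b₂) := Nat.mul_le_mul hle₁ hle₂
        _ = 2 ^ (a₁ + a₂) * 3 ^ (b₁ + b₂) := by ring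
    · rw [sum_insert hi]
      omega

/-- Trading `2 ^ 3 = 8` for `3 ^ 2 = 9` keeps the cost `6`. -/
theorem exists_le_two_pow_mul_three_pow_of_le_two (a b : ℕ) :
    ∃ A B : ℕ, A ≤ 2 ∧ 2 ^ a * 3 ^ b ≤ 2 ^ A * 3 ^ B ∧ 2 * A + 3 * B ≤ 2 * a + 3 * b := by
  induction a using Nat.strong_induction_on generalizing b with
  | _ a ih =>
    by_cases ha : a ≤ 2
    · exact ⟨a, b, ha, le_rfl, le_rfl⟩
    · obtain ⟨c, rfl⟩ : ∃ c, a = c + 3 := ⟨a - 3, by omega⟩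
      obtain ⟨A, B, hA, hle, hcost⟩ := ih c (by omega) (b + 2)
      refine ⟨A, B, hA, ?_, by omega⟩
      calc 2 ^ (c + 3) * 3 ^ b = 8 * (2 ^ c * 3 ^ b) := by ring
        _ ≤ 9 * (2 ^ c * 3 ^ b) := by omega
        _ = 2 ^ c * 3 ^ (b + 2) := by ring
        _ ≤ 2 ^ A * 3 ^ B := hle

theorem Finset.exists_le_two_pow_mul_three_pow_mul_sup {ι : Type*} (s : Finset ι) (u : ι → ℕ)
    {p : ℕ} (hp : 2 ≤ p) (hps : p ≤ ∏ i ∈ s, u i) :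
    ∃ A B : ℕ, A ≤ 2 ∧ 2 ≤ s.sup u ∧ p ≤ 2 ^ A * 3 ^ B * s.sup u ∧
      2 * A + 3 * B + s.sup u ≤ ∑ i ∈ s, u i := by
  classical
  have hne : s.Nonempty := nonempty_iff_ne_empty.2 (by rintro rfl; simp at hps; omega)
  obtain ⟨i, hi, hmax⟩ := exists_mem_eq_sup s hne u
  rw [hmax]
  have htwo : 2 ≤ u i := by
    by_contra! h
    have : ∏ j ∈ s, u j ≤ 1 := calc
      ∏ j ∈ s, u j ≤ u i ^ #s := prod_le_pow_card s u (u i) fun j hj => hmax ▸ le_sup hj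
      _ ≤ 1 := pow_le_one₀ (Nat.zero_le _) (by omega)
    omega
  obtain ⟨a, b, hle, hcost⟩ := (s.erase i).exists_prod_le_two_pow_mul_three_pow u
  obtain ⟨A, B, hA, hle', hcost'⟩ := exists_le_two_pow_mul_three_pow_of_le_two a b
  refine ⟨A, B, hA, htwo, ?_, ?_⟩
  · calc p ≤ ∏ j ∈ s, u j := hps
      _ = u i * ∏ j ∈ s.erase i, u j := (mul_prod_erase s u hi).symm
      _ ≤ u i * (2 ^ A * 3 ^ B) := Nat.mul_le_mul_left _ (hle.trans hle')
      _ = 2 ^ A * 3 ^ B * u i := mul_comm _ _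
  · rw [← add_sum_erase s u hi]
    omega

/-- `φ` is a homomorphism from the right null semigroup `P × Q` with
`(a, b) * (c, d) = (c, z₀)` to the transformations of `α`, composed left to right. -/
def IsRightNullHom {P Q α : Type*} (z₀ : Q) (φ : P × Q → α → α) : Prop :=
  ∀ x y, φ (y.1, z₀) = φ y ∘ φ x

theorem IsRightNullHom.arrowCongr {P Q α β : Type*} {z₀ : Q} {φ : P × Q → α → α}
    (hφ : IsRightNullHom z₀ φ) (e : α ≃ β) : IsRightNullHom z₀ (e.arrowCongr e ∘ φ) := by
  intro x y
  rw [comp_apply, hφ x y, Equiv.arrowCongr_comp]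
  rfl

namespace IsRightNullHom

variable {P Q α : Type*} {z₀ : Q} {φ : P × Q → α → α}

variable (z₀ φ) in
def profile (a : α) : P → α := fun c => φ (c, z₀) a

theorem profile_apply (hφ : IsRightNullHom z₀ φ) (x : P × Q) (a : α) :
    profile z₀ φ (φ x a) = profile z₀ φ a :=
  funext fun c => (congrFun (hφ x (c, z₀)) a).symm

variable [Fintype P] [Fintype Q] [Fintype α] [DecidableEq α]

variable (φ) in
def totalImage : Finset α := univ.image (uncurry φ)

variable (z₀ φ) in
def fiber (s : P → α) : Finset α := {b ∈ totalImage φ | profile z₀ φ b = s}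

theorem apply_mem_fiber (hφ : IsRightNullHom z₀ φ) (x : P × Q) (a : α) :
    φ x a ∈ fiber z₀ φ (profile z₀ φ a) :=
  mem_filter.2 ⟨mem_image_of_mem _ (mem_univ (x, a)), hφ.profile_apply x a⟩

theorem apply_eq_of_mem_totalImage (hφ : IsRightNullHom z₀ φ) {b : α} (hb : b ∈ totalImage φ)
    (c : P) (d d' : Q) : φ (c, d) b = φ (c, d') b := by
  obtain ⟨⟨x, a⟩, -, rfl⟩ := mem_image.1 hb
  exact (congrFun (hφ x (c, d)) a).symm.trans (congrFun (hφ x (c, d')) a)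

theorem card_le_prod_card_fiber (hφ : IsRightNullHom z₀ φ) (hinj : Injective φ) :
    Fintype.card P ≤ ∏ s ∈ univ.image (profile z₀ φ), #(fiber z₀ φ s) := by
  classical
  calc Fintype.card P = #(univ : Finset P) := card_univ.symm
    _ ≤ #((univ.image (profile z₀ φ)).pi (fiber z₀ φ)) := by
        refine card_le_card_of_injOn (fun c s _ => s c) (fun c _ => mem_pi.2 fun s hs => ?_)
          fun c _ c' _ h => ?_
        · obtain ⟨a, -, rfl⟩ := mem_image.1 hs
          exact hφ.apply_mem_fiber (c, z₀) a
        · have : φ (c, z₀) = φ (c', z₀) := funext fun a =>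
            congrFun (congrFun h (profile z₀ φ a)) (mem_image_of_mem _ (mem_univ a))
          exact (Prod.ext_iff.1 (hinj this)).1
    _ = ∏ s ∈ univ.image (profile z₀ φ), #(fiber z₀ φ s) := card_pi _ _

theorem card_le_pow_card_compl_totalImage (hφ : IsRightNullHom z₀ φ) (hinj : Injective φ)
    [Nonempty P] {C : ℕ} (hC : ∀ a, #(fiber z₀ φ (profile z₀ φ a)) ≤ C) :
    Fintype.card Q ≤ C ^ #(totalImage φ)ᶜ := by
  obtain ⟨c⟩ := ‹Nonempty P›
  calc Fintype.card Q = #(univ : Finset Q) := card_univ.symm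
    _ ≤ #((totalImage φ)ᶜ.pi fun v => fiber z₀ φ (profile z₀ φ v)) := by
        refine card_le_card_of_injOn (fun d v _ => φ (c, d) v)
          (fun d _ => mem_pi.2 fun v _ => hφ.apply_mem_fiber (c, d) v) fun d _ d' _ h => ?_
        have : φ (c, d) = φ (c, d') := funext fun b => by
          by_cases hb : b ∈ totalImage φ
          · exact hφ.apply_eq_of_mem_totalImage hb c d d'
          · exact congrFun (congrFun h b) (mem_compl.2 hb)
        exact (Prod.ext_iff.1 (hinj this)).2
    _ = ∏ v ∈ (totalImage φ)ᶜ, #(fiber z₀ φ (profile z₀ φ v)) := card_pi _ _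
    _ ≤ C ^ #(totalImage φ)ᶜ := prod_le_pow_card _ _ _ fun v _ => hC v

theorem sum_card_fiber_add_card_compl_totalImage :
    ∑ s ∈ univ.image (profile z₀ φ), #(fiber z₀ φ s) + #(totalImage φ)ᶜ = Fintype.card α :=
  (congrArg (· + _) (card_eq_sum_card_fiberwise fun a _ => mem_image_of_mem _ (mem_univ a)).symm
    ).trans (card_add_card_compl _)

theorem exists_cost_le_card (hφ : IsRightNullHom z₀ φ) (hinj : Injective φ)
    (hP : 2 ≤ Fintype.card P) :
    ∃ A B C D : ℕ, A ≤ 2 ∧ 2 ≤ C ∧ Fintype.card P ≤ 2 ^ A * 3 ^ B * C ∧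
      Fintype.card Q ≤ C ^ D ∧ 2 * A + 3 * B + C + D ≤ Fintype.card α := by
  have : Nonempty P := Fintype.card_pos_iff.1 (by omega)
  obtain ⟨A, B, hA, hC, hPle, hcost⟩ :=
    (univ.image (profile z₀ φ)).exists_le_two_pow_mul_three_pow_mul_sup _ hP
      (hφ.card_le_prod_card_fiber hinj)
  refine ⟨A, B, _, _, hA, hC, hPle,
    hφ.card_le_pow_card_compl_totalImage hinj fun a =>
      le_sup (f := fun s => #(fiber z₀ φ s)) (mem_image_of_mem _ (mem_univ a)), ?_⟩
  have := sum_card_fiber_add_card_compl_totalImage (z₀ := z₀) (φ := φ)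
  omega

end IsRightNullHom

section UpperBound

variable {P Q W L K E : Type*}

/-- Swapping `ψ z₀` with the constant map at `(ι c).2` makes `Ψ c z₀` constant, as the zero
column requires, while keeping `Ψ c` injective. -/
theorem exists_injective_isRightNullHom_sum [DecidableEq (E → K)] (z₀ : Q) {ρ : L → W → W}
    (hρ : Injective ρ) (hρρ : ∀ l l' w, ρ l (ρ l' w) = ρ l w) {ι : P → L × K} (hι : Injective ι)
    {ψ : Q → E → K} (hψ : Injective ψ) :
    ∃ φ : P × Q → (W ⊕ K ⊕ E → W ⊕ K ⊕ E), Injective φ ∧ IsRightNullHom z₀ φ := by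
  let Ψ : P → Q → E → K := fun c d => Equiv.swap (ψ z₀) (fun _ => (ι c).2) (ψ d)
  have hΨ : ∀ c, Ψ c z₀ = fun _ => (ι c).2 := fun c => Equiv.swap_apply_left _ _
  refine ⟨fun x => Sum.map (ρ (ι x.1).1) fun t =>
      .inl (Sum.elim (fun _ => (ι x.1).2) (Ψ x.1 x.2) t),
    ?_, fun x y => funext fun t => ?_⟩
  · rintro ⟨c, d⟩ ⟨c', d'⟩ h
    have hK : (ι c).2 = (ι c').2 := by
      simpa using congrFun h (.inr (.inl (ι c).2))
    have hW : ρ (ι c).1 = ρ (ι c').1 := funext fun w => by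
      simpa using congrFun h (.inl w)
    obtain rfl : c = c' := hι (Prod.ext (hρ hW) hK)
    have hE : Ψ c d = Ψ c d' := funext fun e => by
      simpa using congrFun h (.inr (.inr e))
    rw [hψ (Equiv.injective _ hE)]
  · rcases t with w | k | e <;> simp [hρρ, hΨ]

def sigmaCollapse {ι : Type*} {β : ι → Type*} (f : ∀ i, β i) (x : Σ i, β i) : Σ i, β i :=
  ⟨x.1, f x.1⟩

theorem sigmaCollapse_injective {ι : Type*} {β : ι → Type*} :
    Injective (sigmaCollapse (β := β)) := by
  intro f g h
  funext i
  simpa [sigmaCollapse] using congrFun h ⟨i, f i⟩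

theorem exists_injective_isRightNullHom_fin [Fintype P] [Fintype Q] (z₀ : Q) {A B C D : ℕ}
    (hP : Fintype.card P ≤ 2 ^ A * 3 ^ B * C) (hQ : Fintype.card Q ≤ C ^ D) :
    ∃ φ : P × Q → (Fin (2 * A + 3 * B + C + D) → Fin (2 * A + 3 * B + C + D)),
      Injective φ ∧ IsRightNullHom z₀ φ := by
  let m : Fin A ⊕ Fin B → ℕ := Sum.elim (fun _ => 2) (fun _ => 3)
  obtain ⟨ι⟩ : Nonempty (P ↪ (∀ i, Fin (m i)) × Fin C) :=
    Function.Embedding.nonempty_of_card_le (by simpa [m] using hP)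
  obtain ⟨ψ⟩ : Nonempty (Q ↪ (Fin D → Fin C)) :=
    Function.Embedding.nonempty_of_card_le (by simpa using hQ)
  obtain ⟨φ, hinj, hφ⟩ := exists_injective_isRightNullHom_sum z₀ sigmaCollapse_injective
    (fun _ _ _ => rfl) ι.injective ψ.injective
  let e := Fintype.equivFinOfCardEq (α := (Σ i, Fin (m i)) ⊕ Fin C ⊕ Fin D)
    (n := 2 * A + 3 * B + C + D) (by simp [m]; ring)
  exact ⟨e.arrowCongr e ∘ φ, (Equiv.injective _).comp hinj, hφ.arrowCongr e⟩

end UpperBound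

/-- For `p, q ≥ 2`, the minimum transformation degree of a `p × q` right null semigroup
(`Fin p × Fin q` with multiplication `(a,b)·(c,d) = (c, 0)`) equals
`min { 2A + 3B + C + D : 0 ≤ A ≤ 2, B, D ≥ 0, C ≥ 2, 2^A·3^B·C ≥ p, C^D ≥ q }`. -/
theorem right_null_degree (p q : ℕ) (hp : 2 ≤ p) (hq : 2 ≤ q) :
    sInf {n | 1 ≤ n ∧ ∃ φ : Fin p × Fin q → (Fin n → Fin n), Function.Injective φ ∧
        ∀ x y : Fin p × Fin q, φ (y.1, (⟨0, by omega⟩ : Fin q)) = tMul (φ x) (φ y)}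
      = sInf {k | ∃ A B C D : ℕ, A ≤ 2 ∧ 2 ≤ C ∧ p ≤ 2 ^ A * 3 ^ B * C ∧ q ≤ C ^ D ∧
          k = 2 * A + 3 * B + C + D} := by
  apply csInf_eq_csInf_of_forall_exists_le
  · rintro n ⟨-, φ, hinj, hφ⟩
    obtain ⟨A, B, C, D, hA, hC, hpc, hqc, hle⟩ :=
      IsRightNullHom.exists_cost_le_card (φ := φ) hφ hinj (by simpa using hp)
    simp only [Fintype.card_fin] at hpc hqc hle
    exact ⟨_, ⟨A, B, C, D, hA, hC, hpc, hqc, rfl⟩, hle⟩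
  · rintro k ⟨A, B, C, D, -, hC, hpc, hqc, rfl⟩
    obtain ⟨φ, hinj, hφ⟩ :=
      exists_injective_isRightNullHom_fin (P := Fin p) (⟨0, by omega⟩ : Fin q)
        (by simpa using hpc) (by simpa using hqc)
    exact ⟨_, ⟨by omega, φ, hinj, hφ⟩, le_rfl⟩
end

section
/- Let G be a finite group and let S = G ∪ {0} be the semigroup obtained from G by adjoining a zero element 0 (with 0·x = x·0 = 0·0 = 0 for all x ∈ G). Then the minimum transformation degree of S equals the minimum transformation degree of G plus 1: μ(S) = μ(G) + 1. -/
/-!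
A zero added to `G` can be realised by a constant map to a new point fixed by all of `G`, so
`μ(G ∪ {0}) ≤ μ(G) + 1`. Conversely, let `ψ` be a faithful representation of `G ∪ {0}` on `X`.
Then `ψ 1` is idempotent, every `ψ g` is a permutation of the range of `ψ 1` and is determined
by its restriction to it, and every point in the range of `ψ 0` is fixed by all of `G`. Removing
one such point from the range of `ψ 1` leaves a faithful representation of `G` on fewer than
`|X|` points.
-/

open Function Set

def EmbedsInTransformations (S X : Type*) [Mul S] : Prop :=
  ∃ φ : S → X → X, Injective φ ∧ ∀ x y, φ (x * y) = φ y ∘ φ x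

namespace EmbedsInTransformations

variable {S X Y : Type*} [Mul S]

theorem of_injective (h : EmbedsInTransformations S X) {ι : X → Y} (hι : Injective ι) :
    EmbedsInTransformations S Y := by
  obtain ⟨σ, hinj, hmul⟩ := h
  refine ⟨fun s => extend ι (ι ∘ σ s) id, fun s t hst => hinj (funext fun x => hι ?_),
    fun s t => funext fun y => ?_⟩
  · simpa [hι.extend_apply] using congrFun hst (ι x)
  · by_cases hy : ∃ x, ι x = y
    · obtain ⟨x, rfl⟩ := hy
      simp [hι.extend_apply, hmul]
    · simp [extend_apply' _ _ _ hy]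

theorem of_card_le [Fintype X] [Fintype Y] (h : EmbedsInTransformations S X)
    (hXY : Fintype.card X ≤ Fintype.card Y) : EmbedsInTransformations S Y :=
  let ⟨ι⟩ := Function.Embedding.nonempty_of_card_le hXY
  h.of_injective ι.injective

theorem nontrivial [Nontrivial S] (h : EmbedsInTransformations S X) : Nontrivial X := by
  obtain ⟨φ, hinj, -⟩ := h
  by_contra hX
  have : Subsingleton X := not_nontrivial_iff_subsingleton.mp hX
  obtain ⟨s, t, hst⟩ := exists_pair_ne S
  exact hst (hinj (Subsingleton.elim _ _))

theorem restrict {σ : S → X → X} (hmul : ∀ x y, σ (x * y) = σ y ∘ σ x) {A : Set X}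
    (hA : ∀ s, MapsTo (σ s) A A) (hdet : ∀ s t, EqOn (σ s) (σ t) A → s = t) :
    EmbedsInTransformations S A :=
  ⟨fun s => (hA s).restrict, fun s t hst => hdet s t fun a ha => congrArg Subtype.val
    (congrFun hst ⟨a, ha⟩), fun s t => funext fun a => Subtype.ext (by simp [hmul])⟩

theorem withZero [Nonempty X] (h : EmbedsInTransformations S X) :
    EmbedsInTransformations (WithZero S) (Option X) := by
  obtain ⟨σ, hinj, hmul⟩ := h
  obtain ⟨x⟩ := ‹Nonempty X›
  let ψ : WithZero S → Option X → Option X :=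
    WithZero.recZeroCoe (fun _ => none) (fun s => Option.map (σ s))
  refine ⟨ψ, fun a b hab => ?_, fun a b => ?_⟩
  · induction a <;> induction b
    · rfl
    · simpa [ψ] using congrFun hab (some x)
    · simpa [ψ] using congrFun hab (some x)
    · exact congrArg _ (hinj (Option.map_injective' hab))
  · induction a with
    | zero => induction b <;> rfl
    | coe s => induction b with
      | zero => rfl
      | coe t =>
        change Option.map (σ (s * t)) = Option.map (σ t) ∘ Option.map (σ s)
        rw [hmul, Option.map_comp_map]

theorem of_fixed_point {G : Type*} [Group G] {σ : G → X → X} (hinj : Injective σ)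
    (hmul : ∀ g h, σ (g * h) = σ h ∘ σ g) (p : X) (hp : ∀ g, σ g p = p) :
    EmbedsInTransformations G {x // x ≠ p} := by
  have hleft : ∀ g x, σ g (σ 1 x) = σ g x := fun g x => by
    simpa using (congrFun (hmul 1 g) x).symm
  have hright : ∀ g x, σ 1 (σ g x) = σ g x := fun g x => by
    simpa using (congrFun (hmul g 1) x).symm
  have hinv : ∀ g x, σ g⁻¹ (σ g x) = σ 1 x := fun g x => by
    simpa using (congrFun (hmul g g⁻¹) x).symm
  -- `σ 1` need not be the identity: only on its range does `G` act by permutations.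
  let A : Set X := range (σ 1) ∩ {p}ᶜ
  have hA : ∀ g, MapsTo (σ g) A A := by
    rintro g _ ⟨⟨x, rfl⟩, hx⟩
    refine ⟨⟨_, hright g _⟩, fun hgx => hx ?_⟩
    calc σ 1 x = σ g⁻¹ (σ g (σ 1 x)) := by rw [hinv, hleft]
      _ = p := by rw [mem_singleton_iff.mp hgx, hp]
  have hdet : ∀ g h, EqOn (σ g) (σ h) A → g = h := by
    refine fun g h hgh => hinj (funext fun x => ?_)
    rw [← hleft g, ← hleft h]
    by_cases hx : σ 1 x = p
    · rw [hx, hp, hp]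
    · exact hgh ⟨mem_range_self x, hx⟩
  exact (restrict hmul hA hdet).of_injective (inclusion_injective inter_subset_right)

theorem exists_ne_of_withZero {G : Type*} [Group G]
    (h : EmbedsInTransformations (WithZero G) X) :
    ∃ p : X, EmbedsInTransformations G {x // x ≠ p} := by
  obtain ⟨x⟩ : Nonempty X := h.nontrivial.to_nonempty
  obtain ⟨ψ, hinj, hmul⟩ := h
  refine ⟨ψ 0 x, of_fixed_point (σ := fun g : G => ψ g) (hinj.comp WithZero.coe_injective)
    (fun g h => by rw [← hmul, WithZero.coe_mul]) _ fun g => ?_⟩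
  simpa using (congrFun (hmul 0 g) x).symm

end EmbedsInTransformations

theorem embedsInTransformations_self (M : Type*) [Monoid M] : EmbedsInTransformations M M :=
  ⟨fun a b => b * a, fun a b h => by simpa using congrFun h 1,
    fun a b => funext fun c => (mul_assoc c a b).symm⟩

/-- The minimum transformation degree `μ(S)`. -/
noncomputable def transformationDegree (S : Type*) [Mul S] : ℕ :=
  sInf {n | 1 ≤ n ∧ EmbedsInTransformations S (Fin n)}

section transformationDegree

variable {S : Type*} [Mul S] {n : ℕ}

theorem transformationDegree_le (hn : 1 ≤ n) (h : EmbedsInTransformations S (Fin n)) :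
    transformationDegree S ≤ n :=
  Nat.sInf_le ⟨hn, h⟩

theorem embedsInTransformations_transformationDegree (hn : 1 ≤ n)
    (h : EmbedsInTransformations S (Fin n)) :
    1 ≤ transformationDegree S ∧
      EmbedsInTransformations S (Fin (transformationDegree S)) :=
  Nat.sInf_mem (s := {n | 1 ≤ n ∧ EmbedsInTransformations S (Fin n)}) ⟨n, hn, h⟩

end transformationDegree

/-- For a finite group `G`, the minimum transformation degree of the semigroup `G ∪ {0}`
obtained by adjoining a zero (modelled as `WithZero G`) equals the minimum transformation
degree of `G` plus one. -/
theorem degree_group_with_zero (G : Type) [Group G] [Fintype G] :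
    sInf {n | 1 ≤ n ∧ ∃ φ : WithZero G → (Fin n → Fin n), Function.Injective φ ∧
        ∀ x y : WithZero G, φ (x * y) = tMul (φ x) (φ y)}
      = sInf {n | 1 ≤ n ∧ ∃ φ : G → (Fin n → Fin n), Function.Injective φ ∧
        ∀ x y : G, φ (x * y) = tMul (φ x) (φ y)} + 1 := by
  change transformationDegree (WithZero G) = transformationDegree G + 1
  obtain ⟨hpos, hG⟩ := embedsInTransformations_transformationDegree Fintype.card_pos
    ((embedsInTransformations_self G).of_card_le (Y := Fin (Fintype.card G)) (by simp))
  have : NeZero (transformationDegree G) := ⟨by omega⟩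
  have hG₀ : EmbedsInTransformations (WithZero G) (Fin (transformationDegree G + 1)) :=
    hG.withZero.of_card_le (by simp)
  have hle := transformationDegree_le (by omega) hG₀
  obtain ⟨-, hGk₀⟩ := embedsInTransformations_transformationDegree (by omega) hG₀
  have htwo : 2 ≤ transformationDegree (WithZero G) :=
    Fin.nontrivial_iff_two_le.mp hGk₀.nontrivial
  obtain ⟨p, hGp⟩ := EmbedsInTransformations.exists_ne_of_withZero hGk₀
  have hge := transformationDegree_le (n := transformationDegree (WithZero G) - 1) (by omega)
    (hGp.of_card_le (by simp))
  omega
end
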